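/- arXiv:2305.07071 — 7 statements merged into one kernel-verified Lean document; each statement's English description precedes it below -/
import Mathlib

section
/- Let q ∈ ℝ^M have positive entries, let n ≥ 1, and for each k = 1,…,n let A^k ∈ ℝ^{m_k×M} and b^k ∈ ℝ^{m_k} satisfy the GIS conditions, and set C^k := {x ∈ Δ_M : A^k x = b^k}. Assume C := C^1 ∩ … ∩ C^n is nonempty. Fix a subset I ⊆ {1,…,n} and define a sequence (p^{(k)})_{k≥0} by p^{(0)} = q and, for k ≥ 1 with r := ((k−1) mod n) + 1: if r ∈ I then p^{(k)}_j = p^{(k−1)}_j · exp(Σ_i (A^r)_{ij} · log(b^r_i/(A^r p^{(k−1)})_i)) (the GIS update applied with A^r, b^r), and if r ∉ I then p^{(k)} is the unique minimizer of p ↦ KL(p, p^{(k−1)}) over C^r. Assume moreover that every iterate p^{(k)} has strictly positive entries (so that all steps are well defined). Then p^{(k)} converges, as k → ∞, to the unique minimizer of p ↦ KL(p, q) over p ∈ C. -/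
open Filter Topology

/-- Kullback--Leibler divergence of two nonnegative vectors,
`KL(p, q) = ∑ⱼ (pⱼ log(pⱼ/qⱼ) − pⱼ + qⱼ)`. -/
noncomputable def KL {ι : Type*} [Fintype ι] (p q : ι → ℝ) : ℝ :=
  ∑ j, (p j * Real.log (p j / q j) - p j + q j)

/-!
Both kinds of step obey a Pythagorean identity: for every `z` in the linear family of the step,
`KL z p' = KL z p - d` with `d ≥ 0` independent of `z`. For an I-projection `d = KL p' p`, by the
first-order condition at the (interior) minimizer; for a GIS step
`d = KL b (A p) + (∑ b - ∑ p')`, and `∑ p' ≤ ∑ b` by Jensen's inequality for `exp`. Hence for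
every `z ∈ C` the sequence `KL z (p k)` decreases, the decrements tend to zero, the iterates stay
bounded, and `KL z (p k) - KL z q` does not depend on `z`.

The squared Hellinger distance `∑ⱼ (√zⱼ - √pⱼ)²` is dominated by `KL z p`, so vanishing
decrements make the steps asymptotically trivial: along a subsequence of whole cycles all iterates
of a cycle converge to one point `x`, which then satisfies every constraint. Monotonicity turns
`KL x (p k) → 0` along the subsequence into `p k → x`, and for `z ∈ C`, `z ≠ x`,
`KL z q - KL x q = lim (KL z (p k) - KL x (p k)) ≥ ∑ⱼ (√zⱼ - √xⱼ)² > 0`.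
-/

open Matrix Real

lemma sq_sqrt_sub_sqrt_le {x y : ℝ} (hx : 0 ≤ x) (hy : 0 < y) :
    (√x - √y) ^ 2 ≤ x * log (x / y) - x + y := by
  rcases hx.eq_or_lt with rfl | hx
  · simp [sq_sqrt hy.le]
  -- `log (x / y) = 2 log √(x / y) ≥ 2 (1 - √y / √x)`
  have hxy : 0 < x / y := div_pos hx hy
  have hlog := one_sub_inv_le_log_of_pos (sqrt_pos.2 hxy)
  rw [log_sqrt hxy.le, sqrt_div' _ hy.le, inv_div] at hlog
  have hmul : x * (√y / √x) = √x * √y := by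
    field_simp; rw [sq_sqrt hx.le]
  nlinarith [sq_sqrt hx.le, sq_sqrt hy.le]

lemma hasDerivAt_mul_log_div {x y : ℝ} (hx : 0 < x) (hy : 0 < y) :
    HasDerivAt (fun x => x * log (x / y) - x + y) (log (x / y)) x := by
  have h := (((hasDerivAt_id' x).fun_mul (((hasDerivAt_id' x).div_const y).log
    (div_pos hx hy).ne')).fun_sub (hasDerivAt_id' x)).add_const y
  refine h.congr_deriv ?_
  field_simp
  ring

variable {ι κ : Type*} [Fintype ι]

lemma sum_sq_sqrt_sub_sqrt_le_KL {p q : ι → ℝ} (hp : ∀ j, 0 ≤ p j) (hq : ∀ j, 0 < q j) :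
    ∑ j, (√(p j) - √(q j)) ^ 2 ≤ KL p q :=
  Finset.sum_le_sum fun j _ => sq_sqrt_sub_sqrt_le (hp j) (hq j)

lemma KL_nonneg {p q : ι → ℝ} (hp : ∀ j, 0 ≤ p j) (hq : ∀ j, 0 < q j) : 0 ≤ KL p q :=
  (Finset.sum_nonneg fun _ _ => sq_nonneg _).trans (sum_sq_sqrt_sub_sqrt_le_KL hp hq)

lemma sq_sqrt_sub_sqrt_le_KL {p q : ι → ℝ} (hp : ∀ j, 0 ≤ p j) (hq : ∀ j, 0 < q j) (j : ι) :
    (√(p j) - √(q j)) ^ 2 ≤ KL p q :=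
  (Finset.single_le_sum (fun j _ => sq_nonneg (√(p j) - √(q j))) (Finset.mem_univ j)).trans
    (sum_sq_sqrt_sub_sqrt_le_KL hp hq)

lemma sum_sq_sqrt_sub_sqrt_pos {p q : ι → ℝ} (hp : ∀ j, 0 ≤ p j) (hq : ∀ j, 0 ≤ q j)
    (hne : p ≠ q) : 0 < ∑ j, (√(p j) - √(q j)) ^ 2 := by
  obtain ⟨j, hj⟩ := Function.ne_iff.1 hne
  have hsqrt : √(p j) - √(q j) ≠ 0 :=
    sub_ne_zero.2 fun h => hj ((sqrt_inj (hp j) (hq j)).1 h)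
  exact (pow_two_pos_of_ne_zero hsqrt).trans_le
    (Finset.single_le_sum (fun j _ => sq_nonneg (√(p j) - √(q j))) (Finset.mem_univ j))

lemma KL_sub_KL {z p p' : ι → ℝ} (hz : ∀ j, 0 ≤ z j) (hp : ∀ j, 0 < p j)
    (hp' : ∀ j, 0 < p' j) :
    KL z p - KL z p' = ∑ j, (z j * log (p' j / p j) - p' j + p j) := by
  rw [KL, KL, ← Finset.sum_sub_distrib]
  refine Finset.sum_congr rfl fun j _ => ?_
  rcases (hz j).eq_or_lt with h | h
  · rw [← h]; ring
  · rw [show z j / p j = z j / p' j * (p' j / p j) by field_simp [(hp' j).ne'],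
      log_mul (div_pos h (hp' j)).ne' (div_pos (hp' j) (hp j)).ne']
    ring

section Limits

variable {α : Type*} {l : Filter α}

lemma tendsto_KL_of_tendsto {x : ι → ℝ} {y : α → ι → ℝ} (hx : ∀ j, 0 ≤ x j)
    (hy : Tendsto y l (𝓝 x)) : Tendsto (fun a => KL x (y a)) l (𝓝 0) := by
  have hterm : ∀ j, Tendsto (fun a => x j * log (x j / y a j) - x j + y a j) l (𝓝 0) := by
    intro j
    have hyj := tendsto_pi_nhds.1 hy j
    rcases (hx j).eq_or_lt with h | h
    · simpa [← h] using hyj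
    · have := (((tendsto_const_nhds.div hyj h.ne').log (div_pos h h).ne').const_mul (x j)).sub_const
        (x j) |>.add hyj
      simpa [div_self h.ne'] using this
  simpa [KL] using tendsto_finsetSum Finset.univ fun j _ => hterm j

lemma tendsto_dist_sqrt_of_tendsto_KL {u v : α → ι → ℝ} (hu : ∀ a j, 0 < u a j)
    (hv : ∀ a j, 0 ≤ v a j) (hKL : Tendsto (fun a => KL (v a) (u a)) l (𝓝 0)) (j : ι) :
    Tendsto (fun a => dist (√(v a j)) (√(u a j))) l (𝓝 0) := by
  refine squeeze_zero (fun a => dist_nonneg) (fun a => ?_) (by simpa using hKL.sqrt)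
  exact abs_le_sqrt (sq_sqrt_sub_sqrt_le_KL (hv a) (hu a) j)

lemma tendsto_of_tendsto_dist_sqrt [l.NeBot] {f g : α → ℝ} {c : ℝ} (hf : ∀ a, 0 ≤ f a)
    (hg : ∀ a, 0 ≤ g a) (hd : Tendsto (fun a => dist (√(f a)) (√(g a))) l (𝓝 0))
    (hfc : Tendsto f l (𝓝 c)) : Tendsto g l (𝓝 c) := by
  have hc : 0 ≤ c := ge_of_tendsto' hfc hf
  simpa [fun a => sq_sqrt (hg a), sq_sqrt hc] using (hfc.sqrt.congr_dist hd).pow 2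

lemma tendsto_iff_of_tendsto_KL [l.NeBot] {u v : α → ι → ℝ} {x : ι → ℝ}
    (hu : ∀ a j, 0 < u a j) (hv : ∀ a j, 0 ≤ v a j)
    (hKL : Tendsto (fun a => KL (v a) (u a)) l (𝓝 0)) :
    Tendsto u l (𝓝 x) ↔ Tendsto v l (𝓝 x) := by
  have hd := tendsto_dist_sqrt_of_tendsto_KL hu hv hKL
  simp only [tendsto_pi_nhds]
  refine ⟨fun h j => ?_, fun h j => ?_⟩
  · refine tendsto_of_tendsto_dist_sqrt (fun a => (hu a j).le) (hv · j) ?_ (h j)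
    simpa only [dist_comm] using hd j
  · exact tendsto_of_tendsto_dist_sqrt (hv · j) (fun a => (hu a j).le) (hd j) (h j)

end Limits

def linearFamily (A : κ → ι → ℝ) (b : κ → ℝ) : Set (ι → ℝ) :=
  {x | (∀ j, 0 ≤ x j) ∧ (∑ j, x j = 1) ∧ ∀ i, ∑ j, A i j * x j = b i}

section GIS

variable [Fintype κ]

structure GISConditions (A : κ → ι → ℝ) (b : κ → ℝ) : Prop where
  nonneg : ∀ i j, 0 ≤ A i j
  row_ne_zero : ∀ i, ∃ j, A i j ≠ 0
  sum_col : ∀ j, ∑ i, A i j = 1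
  pos : ∀ i, 0 < b i
  sum_eq_one : ∑ i, b i = 1

noncomputable def gisStep (A : κ → ι → ℝ) (b : κ → ℝ) (q : ι → ℝ) : ι → ℝ :=
  fun j => q j * exp (∑ i, A i j * log (b i / (A *ᵥ q) i))

namespace GISConditions

variable {A : κ → ι → ℝ} {b : κ → ℝ}

lemma mulVec_pos (h : GISConditions A b) {q : ι → ℝ} (hq : ∀ j, 0 < q j) (i : κ) :
    0 < (A *ᵥ q) i := by
  obtain ⟨j, hj⟩ := h.row_ne_zero i
  exact Finset.sum_pos' (fun j _ => mul_nonneg (h.nonneg i j) (hq j).le)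
    ⟨j, Finset.mem_univ j, mul_pos ((h.nonneg i j).lt_of_ne' hj) (hq j)⟩

lemma sum_mulVec (h : GISConditions A b) (q : ι → ℝ) : ∑ i, (A *ᵥ q) i = ∑ j, q j := by
  simp only [mulVec, dotProduct]
  rw [Finset.sum_comm]
  simp [← Finset.sum_mul, h.sum_col]

lemma mem_linearFamily (h : GISConditions A b) {x : ι → ℝ} (hx0 : ∀ j, 0 ≤ x j) (hx : A *ᵥ x = b) :
    x ∈ linearFamily A b :=
  ⟨hx0, by rw [← h.sum_mulVec, hx, h.sum_eq_one], congrFun hx⟩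

lemma sum_gisStep_le (h : GISConditions A b) {q : ι → ℝ} (hq : ∀ j, 0 < q j) :
    ∑ j, gisStep A b q j ≤ ∑ i, b i := by
  -- Jensen for `exp` with the weights `A i j`, `i : κ`
  have hjensen : ∀ j, gisStep A b q j ≤ ∑ i, A i j * (b i / (A *ᵥ q) i) * q j := by
    intro j
    have := convexOn_exp.map_sum_le (t := Finset.univ) (fun i _ => h.nonneg i j) (h.sum_col j)
      (fun i _ => Set.mem_univ (log (b i / (A *ᵥ q) i)))
    simp only [smul_eq_mul, exp_log (div_pos (h.pos _) (h.mulVec_pos hq _))] at this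
    rw [gisStep, ← Finset.sum_mul, mul_comm]
    exact mul_le_mul_of_nonneg_right this (hq j).le
  calc ∑ j, gisStep A b q j ≤ ∑ j, ∑ i, A i j * (b i / (A *ᵥ q) i) * q j :=
        Finset.sum_le_sum fun j _ => hjensen j
    _ = ∑ i, b i / (A *ᵥ q) i * (A *ᵥ q) i := by
        rw [Finset.sum_comm]
        refine Finset.sum_congr rfl fun i _ => ?_
        simp only [mulVec, dotProduct, Finset.mul_sum]
        exact Finset.sum_congr rfl fun j _ => by ring
    _ = ∑ i, b i := Finset.sum_congr rfl fun i _ => div_mul_cancel₀ _ (h.mulVec_pos hq i).ne'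

lemma KL_sub_KL_gisStep (h : GISConditions A b) {q z : ι → ℝ} (hq : ∀ j, 0 < q j)
    (hz0 : ∀ j, 0 ≤ z j) (hz : A *ᵥ z = b) :
    KL z q - KL z (gisStep A b q) = KL b (A *ᵥ q) + (∑ i, b i - ∑ j, gisStep A b q j) := by
  have hG : ∀ j, 0 < gisStep A b q j := fun j => mul_pos (hq j) (exp_pos _)
  have hlog : ∀ j, log (gisStep A b q j / q j) = ∑ i, A i j * log (b i / (A *ᵥ q) i) := by
    intro j
    rw [gisStep, mul_div_cancel_left₀ _ (hq j).ne', log_exp]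
  have hcross : ∑ j, z j * log (gisStep A b q j / q j) = ∑ i, b i * log (b i / (A *ᵥ q) i) := by
    calc ∑ j, z j * log (gisStep A b q j / q j)
        = ∑ i, (A *ᵥ z) i * log (b i / (A *ᵥ q) i) := by
          simp only [hlog, Finset.mul_sum, mulVec, dotProduct, Finset.sum_mul]
          rw [Finset.sum_comm]
          exact Finset.sum_congr rfl fun i _ => Finset.sum_congr rfl fun j _ => by ring
      _ = ∑ i, b i * log (b i / (A *ᵥ q) i) := by rw [hz]
  rw [KL_sub_KL hz0 hq hG, KL, Finset.sum_add_distrib, Finset.sum_sub_distrib, hcross,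
    Finset.sum_add_distrib, Finset.sum_sub_distrib, h.sum_mulVec]
  ring

lemma gisStep_eq_self (h : GISConditions A b) {x : ι → ℝ} (hx : A *ᵥ x = b) :
    gisStep A b x = x := by
  funext j
  simp [gisStep, hx, div_self (h.pos _).ne']

lemma continuousAt_gisStep (h : GISConditions A b) {x : ι → ℝ} (hx : A *ᵥ x = b) :
    ContinuousAt (gisStep A b) x := by
  have hlog : ∀ i, ContinuousAt (fun q : ι → ℝ => log (b i / (A *ᵥ q) i)) x := by
    intro i
    have hAx : (A *ᵥ x) i ≠ 0 := by rw [hx]; exact (h.pos i).ne'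
    have hcont : Continuous fun q : ι → ℝ => (A *ᵥ q) i :=
      (continuous_apply i).comp (continuous_const.matrix_mulVec continuous_id)
    exact (continuousAt_const.div hcont.continuousAt hAx).log (div_ne_zero (h.pos i).ne' hAx)
  refine continuousAt_pi.2 fun j => ?_
  exact (continuous_apply j).continuousAt.mul (continuous_exp.continuousAt.comp
    (tendsto_finsetSum _ fun i _ => continuousAt_const.mul (hlog i)))

end GISConditions

end GIS

section LinearFamily

variable {A : κ → ι → ℝ} {b : κ → ℝ}

lemma isClosed_linearFamily : IsClosed (linearFamily A b) := by
  simp only [linearFamily, Set.ofPred_and, Set.ofPred_forall]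
  refine .inter (isClosed_iInter fun j => isClosed_le continuous_const (continuous_apply j))
    (.inter (isClosed_eq (by fun_prop) continuous_const)
      (isClosed_iInter fun i => isClosed_eq (by fun_prop) continuous_const))

lemma affineCombination_mem_linearFamily {x z : ι → ℝ} {t : ℝ} (hx : x ∈ linearFamily A b)
    (hz : z ∈ linearFamily A b) (ht : ∀ j, 0 ≤ (1 - t) * x j + t * z j) :
    (fun j => (1 - t) * x j + t * z j) ∈ linearFamily A b := by
  refine ⟨ht, ?_, fun i => ?_⟩
  · simp [Finset.sum_add_distrib, ← Finset.mul_sum, hx.2.1, hz.2.1]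
  · simp only [mul_add, mul_left_comm (A i _), Finset.sum_add_distrib, ← Finset.mul_sum,
      hx.2.2 i, hz.2.2 i]
    ring

lemma KL_sub_KL_of_isMinOn {p p' z : ι → ℝ} (hp : ∀ j, 0 < p j) (hp' : ∀ j, 0 < p' j)
    (hp'L : p' ∈ linearFamily A b) (hmin : IsMinOn (fun x => KL x p) (linearFamily A b) p')
    (hz : z ∈ linearFamily A b) : KL z p - KL z p' = KL p' p := by
  set φ : ℝ → ℝ := fun t => KL (fun j => (1 - t) * p' j + t * z j) p
  have hderiv : HasDerivAt φ (∑ j, log (p' j / p j) * (z j - p' j)) 0 := by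
    refine HasDerivAt.fun_sum fun j _ => (hasDerivAt_mul_log_div (hp' j) (hp j)).comp_of_eq 0 ?_
      (by simp)
    exact (((hasDerivAt_id' (0 : ℝ)).const_sub 1 |>.mul_const (p' j)).fun_add
      ((hasDerivAt_id' (0 : ℝ)).mul_const (z j))).congr_deriv (by ring)
  -- `p'` has positive entries, so it stays in the linear family when moved a little along the
  -- line through `z`, in both directions
  have hmin_loc : IsLocalMin φ 0 := by
    have hpos : ∀ᶠ t in 𝓝 (0 : ℝ), ∀ j, 0 < (1 - t) * p' j + t * z j := by
      refine eventually_all.2 fun j => Tendsto.eventually_const_lt (hp' j) ?_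
      exact (by fun_prop : Continuous fun t : ℝ => (1 - t) * p' j + t * z j).tendsto' 0 _ (by simp)
    filter_upwards [hpos] with t ht
    simpa [φ] using isMinOn_iff.1 hmin _
      (affineCombination_mem_linearFamily hp'L hz fun j => (ht j).le)
  have hfirst := hmin_loc.hasDerivAt_eq_zero hderiv
  rw [KL_sub_KL hz.1 hp hp', KL, ← sub_eq_zero, ← Finset.sum_sub_distrib, ← hfirst]
  exact Finset.sum_congr rfl fun j _ => by ring

end LinearFamily

def IsUniformKLDescent (S : Set (ι → ℝ)) (p p' : ι → ℝ) : Prop :=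
  ∃ d ≥ 0, ∀ z ∈ S, KL z p' = KL z p - d

lemma IsUniformKLDescent.mono {S T : Set (ι → ℝ)} {p p' : ι → ℝ} (h : IsUniformKLDescent S p p')
    (hTS : T ⊆ S) : IsUniformKLDescent T p p' :=
  let ⟨d, hd, hS⟩ := h
  ⟨d, hd, fun z hz => hS z (hTS hz)⟩

lemma GISConditions.isUniformKLDescent_gisStep [Fintype κ] {A : κ → ι → ℝ} {b : κ → ℝ}
    (h : GISConditions A b) {q : ι → ℝ} (hq : ∀ j, 0 < q j) :
    IsUniformKLDescent (linearFamily A b) q (gisStep A b q) :=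
  ⟨_, add_nonneg (KL_nonneg (fun i => (h.pos i).le) (h.mulVec_pos hq))
    (sub_nonneg.2 (h.sum_gisStep_le hq)), fun z hz => by
      rw [← h.KL_sub_KL_gisStep hq hz.1 (funext hz.2.2), sub_sub_cancel]⟩

lemma isUniformKLDescent_of_isMinOn {A : κ → ι → ℝ} {b : κ → ℝ} {p p' : ι → ℝ}
    (hp : ∀ j, 0 < p j) (hp' : ∀ j, 0 < p' j) (hp'L : p' ∈ linearFamily A b)
    (hmin : IsMinOn (fun x => KL x p) (linearFamily A b) p') :
    IsUniformKLDescent (linearFamily A b) p p' :=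
  ⟨_, KL_nonneg (fun j => (hp' j).le) hp, fun z hz => by
    rw [← KL_sub_KL_of_isMinOn hp hp' hp'L hmin hz, sub_sub_cancel]⟩

section Descent

variable {D : Set (ι → ℝ)} {p : ℕ → ι → ℝ}

lemma antitone_KL_of_isUniformKLDescent (hD : ∀ k, IsUniformKLDescent D (p k) (p (k + 1)))
    {z : ι → ℝ} (hz : z ∈ D) : Antitone fun k => KL z (p k) :=
  antitone_nat_of_succ_le fun k => by
    obtain ⟨d, hd, h⟩ := hD k
    rw [h z hz]
    linarith

lemma KL_sub_KL_eq_of_isUniformKLDescent (hD : ∀ k, IsUniformKLDescent D (p k) (p (k + 1)))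
    {z z' : ι → ℝ} (hz : z ∈ D) (hz' : z' ∈ D) (k : ℕ) :
    KL z (p k) - KL z' (p k) = KL z (p 0) - KL z' (p 0) := by
  induction k with
  | zero => rfl
  | succ k ih =>
    obtain ⟨d, -, h⟩ := hD k
    rw [h z hz, h z' hz', ← ih]
    ring

lemma tendsto_KL_sub_KL_succ (hD : ∀ k, IsUniformKLDescent D (p k) (p (k + 1)))
    (hp : ∀ k j, 0 < p k j) {z : ι → ℝ} (hz : z ∈ D) (hz0 : ∀ j, 0 ≤ z j) :
    Tendsto (fun k => KL z (p k) - KL z (p (k + 1))) atTop (𝓝 0) := by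
  have hlim := tendsto_atTop_ciInf (antitone_KL_of_isUniformKLDescent hD hz)
    ⟨0, by rintro _ ⟨k, rfl⟩; exact KL_nonneg hz0 (hp k)⟩
  simpa using hlim.sub (hlim.comp (tendsto_add_atTop_nat 1))

lemma mem_Icc_of_isUniformKLDescent (hD : ∀ k, IsUniformKLDescent D (p k) (p (k + 1)))
    (hp : ∀ k j, 0 < p k j) {z : ι → ℝ} (hz : z ∈ D) (hz0 : ∀ j, 0 ≤ z j) (k : ℕ) :
    p k ∈ Set.Icc 0 fun j => (√(z j) + √(KL z (p 0))) ^ 2 := by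
  refine ⟨fun j => (hp k j).le, fun j => ?_⟩
  have hK : (√(z j) - √(p k j)) ^ 2 ≤ KL z (p 0) :=
    (sq_sqrt_sub_sqrt_le_KL hz0 (hp k) j).trans (antitone_KL_of_isUniformKLDescent hD hz k.zero_le)
  rw [← sqrt_le_left (by positivity)]
  linarith [neg_abs_le (√(z j) - √(p k j)), abs_le_sqrt hK]

lemma tendsto_of_isUniformKLDescent (hD : ∀ k, IsUniformKLDescent D (p k) (p (k + 1)))
    (hp : ∀ k j, 0 < p k j) {x : ι → ℝ} (hx : x ∈ D) (hx0 : ∀ j, 0 ≤ x j) {ψ : ℕ → ℕ}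
    (hψ : Tendsto ψ atTop atTop) (hpx : Tendsto (fun j => p (ψ j)) atTop (𝓝 x)) :
    Tendsto p atTop (𝓝 x) := by
  have hKL : Tendsto (fun k => KL x (p k)) atTop (𝓝 0) :=
    (tendsto_iff_tendsto_subseq_of_antitone (antitone_KL_of_isUniformKLDescent hD hx) hψ).2
      (tendsto_KL_of_tendsto hx0 hpx)
  exact (tendsto_iff_of_tendsto_KL hp (fun _ => hx0) hKL).2 tendsto_const_nhds

lemma KL_lt_KL_of_isUniformKLDescent (hD : ∀ k, IsUniformKLDescent D (p k) (p (k + 1)))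
    (hp : ∀ k j, 0 < p k j) {x z : ι → ℝ} (hx : x ∈ D) (hx0 : ∀ j, 0 ≤ x j) (hz : z ∈ D)
    (hz0 : ∀ j, 0 ≤ z j) (hpx : Tendsto p atTop (𝓝 x)) (hne : z ≠ x) :
    KL x (p 0) < KL z (p 0) := by
  have hlim : Tendsto (fun k => ∑ j, (√(z j) - √(p k j)) ^ 2 - KL x (p k)) atTop
      (𝓝 (∑ j, (√(z j) - √(x j)) ^ 2 - 0)) :=
    (tendsto_finsetSum _ fun j _ =>
      (tendsto_const_nhds.sub (tendsto_pi_nhds.1 hpx j).sqrt).pow 2).sub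
        (tendsto_KL_of_tendsto hx0 hpx)
  have hle : ∑ j, (√(z j) - √(x j)) ^ 2 ≤ KL z (p 0) - KL x (p 0) := by
    refine le_of_tendsto' (by simpa using hlim) fun k => ?_
    rw [← KL_sub_KL_eq_of_isUniformKLDescent hD hz hx k]
    linarith [sum_sq_sqrt_sub_sqrt_le_KL hz0 (hp k)]
  linarith [sum_sq_sqrt_sub_sqrt_pos hz0 hx0 hne]

end Descent

lemma GISConditions.tendsto_gisStep [Fintype κ] {A : κ → ι → ℝ} {b : κ → ℝ}
    (h : GISConditions A b) {u : ℕ → ι → ℝ} {x z : ι → ℝ} (hu : ∀ k j, 0 < u k j)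
    (hux : Tendsto u atTop (𝓝 x)) (hz : z ∈ linearFamily A b)
    (hdec : Tendsto (fun k => KL z (u k) - KL z (gisStep A b (u k))) atTop (𝓝 0)) :
    x ∈ linearFamily A b ∧ Tendsto (fun k => gisStep A b (u k)) atTop (𝓝 x) := by
  have hx0 : ∀ j, 0 ≤ x j := fun j => ge_of_tendsto' (tendsto_pi_nhds.1 hux j) fun k => (hu k j).le
  have hKL : Tendsto (fun k => KL b (A *ᵥ u k)) atTop (𝓝 0) := by
    refine squeeze_zero (fun k => KL_nonneg (fun i => (h.pos i).le) (h.mulVec_pos (hu k)))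
      (fun k => ?_) hdec
    rw [h.KL_sub_KL_gisStep (hu k) hz.1 (funext hz.2.2)]
    linarith [h.sum_gisStep_le (hu k)]
  have hAu : Tendsto (fun k => A *ᵥ u k) atTop (𝓝 (A *ᵥ x)) :=
    ((continuous_const.matrix_mulVec continuous_id).tendsto x).comp hux
  have hAx : A *ᵥ x = b := (tendsto_nhds_unique tendsto_const_nhds <| (tendsto_iff_of_tendsto_KL
    (fun k => h.mulVec_pos (hu k)) (fun _ i => (h.pos i).le) hKL).1 hAu).symm
  refine ⟨h.mem_linearFamily hx0 hAx, ?_⟩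
  have hcont := (h.continuousAt_gisStep hAx).tendsto
  rw [h.gisStep_eq_self hAx] at hcont
  exact hcont.comp hux

lemma tendsto_of_isMinOn {A : κ → ι → ℝ} {b : κ → ℝ} {u v : ℕ → ι → ℝ} {x z : ι → ℝ}
    (hu : ∀ k j, 0 < u k j) (hv : ∀ k j, 0 < v k j) (hvL : ∀ k, v k ∈ linearFamily A b)
    (hmin : ∀ k, IsMinOn (fun y => KL y (u k)) (linearFamily A b) (v k))
    (hux : Tendsto u atTop (𝓝 x)) (hz : z ∈ linearFamily A b)
    (hdec : Tendsto (fun k => KL z (u k) - KL z (v k)) atTop (𝓝 0)) :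
    x ∈ linearFamily A b ∧ Tendsto v atTop (𝓝 x) := by
  have hKL : Tendsto (fun k => KL (v k) (u k)) atTop (𝓝 0) :=
    hdec.congr fun k => KL_sub_KL_of_isMinOn (hu k) (hv k) (hvL k) (hmin k) hz
  have hvx := (tendsto_iff_of_tendsto_KL hu (fun k j => (hv k j).le) hKL).1 hux
  exact ⟨isClosed_linearFamily.mem_of_tendsto hvx (.of_forall hvL), hvx⟩

def IsGISOrProjStep [Fintype κ] (A : κ → ι → ℝ) (b : κ → ℝ) (P : Prop) (p p' : ι → ℝ) : Prop :=
  (P → p' = gisStep A b p) ∧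
    (¬P → p' ∈ linearFamily A b ∧ IsMinOn (fun x => KL x p) (linearFamily A b) p')

namespace IsGISOrProjStep

variable [Fintype κ] {A : κ → ι → ℝ} {b : κ → ℝ} {P : Prop}

lemma isUniformKLDescent {p p' : ι → ℝ} (h : IsGISOrProjStep A b P p p')
    (hG : GISConditions A b) (hp : ∀ j, 0 < p j) (hp' : ∀ j, 0 < p' j) :
    IsUniformKLDescent (linearFamily A b) p p' := by
  by_cases hP : P
  · rw [h.1 hP]
    exact hG.isUniformKLDescent_gisStep hp
  · exact isUniformKLDescent_of_isMinOn hp hp' (h.2 hP).1 (h.2 hP).2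

lemma tendsto {u v : ℕ → ι → ℝ} {x z : ι → ℝ} (h : ∀ k, IsGISOrProjStep A b P (u k) (v k))
    (hG : GISConditions A b) (hu : ∀ k j, 0 < u k j) (hv : ∀ k j, 0 < v k j)
    (hux : Tendsto u atTop (𝓝 x)) (hz : z ∈ linearFamily A b)
    (hdec : Tendsto (fun k => KL z (u k) - KL z (v k)) atTop (𝓝 0)) :
    x ∈ linearFamily A b ∧ Tendsto v atTop (𝓝 x) := by
  by_cases hP : P
  · have hv : v = fun k => gisStep A b (u k) := funext fun k => (h k).1 hP
    subst hv
    exact hG.tendsto_gisStep hu hux hz hdec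
  · exact tendsto_of_isMinOn hu hv (fun k => ((h k).2 hP).1) (fun k => ((h k).2 hP).2) hux hz hdec

end IsGISOrProjStep

lemma mem_iInter_of_tendsto_cyclic {X : Type*} [TopologicalSpace X] {n : ℕ} {S : Fin n → Set X}
    {p : ℕ → X} {ψ : ℕ → ℕ} {x : X}
    (hstep : ∀ s : Fin n, Tendsto (fun j => p (ψ j * n + s)) atTop (𝓝 x) →
      x ∈ S s ∧ Tendsto (fun j => p (ψ j * n + s + 1)) atTop (𝓝 x))
    (hx : Tendsto (fun j => p (ψ j * n)) atTop (𝓝 x)) : x ∈ ⋂ s, S s := by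
  have hcycle : ∀ s < n, Tendsto (fun j => p (ψ j * n + s)) atTop (𝓝 x) := by
    intro s
    induction s with
    | zero => exact fun _ => hx
    | succ s ih => exact fun hs => (hstep ⟨s, by omega⟩ (ih (by omega))).2
  exact Set.mem_iInter.2 fun s => (hstep s (hcycle s s.2)).1

theorem stmt0_general {M n : ℕ} (hn : 0 < n)
    (q : Fin M → ℝ)
    (m : Fin n → ℕ)
    (A : (k : Fin n) → Fin (m k) → Fin M → ℝ) (b : (k : Fin n) → Fin (m k) → ℝ)
    -- GIS conditions for every k:
    (hA0 : ∀ k i j, 0 ≤ A k i j)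
    (hArow : ∀ k i, ∃ j, A k i j ≠ 0)
    (hAcol : ∀ k j, ∑ i, A k i j = 1)
    (hb0 : ∀ k i, 0 < b k i)
    (hbsum : ∀ k, ∑ i, b k i = 1)
    -- the affine constraint sets Cᵏ = {x ∈ Δ_M : Aᵏ x = bᵏ}:
    (C : Fin n → Set (Fin M → ℝ))
    (hC : ∀ k, C k = {x : Fin M → ℝ |
      (∀ j, 0 ≤ x j) ∧ (∑ j, x j = 1) ∧ ∀ i, ∑ j, A k i j * x j = b k i})
    (hCne : (⋂ k, C k).Nonempty)
    -- the subset of indices for which a GIS step is used: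
    (I : Set (Fin n))
    -- the sequence of iterates:
    (p : ℕ → Fin M → ℝ)
    (hp0 : p 0 = q)
    (hppos : ∀ k j, 0 < p k j)
    -- GIS update step, for cyclic constraint indices in I:
    (hGIS : ∀ k : ℕ, (⟨k % n, Nat.mod_lt k hn⟩ : Fin n) ∈ I →
      p (k + 1) = fun j => p k j *
        Real.exp (∑ i, A ⟨k % n, Nat.mod_lt k hn⟩ i j *
          Real.log (b ⟨k % n, Nat.mod_lt k hn⟩ i /
            ∑ j', A ⟨k % n, Nat.mod_lt k hn⟩ i j' * p k j')))
    -- exact KL-projection step, for cyclic constraint indices not in I: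
    (hproj : ∀ k : ℕ, (⟨k % n, Nat.mod_lt k hn⟩ : Fin n) ∉ I →
      p (k + 1) ∈ C ⟨k % n, Nat.mod_lt k hn⟩ ∧
        ∀ z ∈ C ⟨k % n, Nat.mod_lt k hn⟩, KL (p (k + 1)) (p k) ≤ KL z (p k)) :
    ∃ pstar ∈ ⋂ k, C k,
      (∀ z ∈ ⋂ k, C k, z ≠ pstar → KL pstar q < KL z q) ∧
      Tendsto p atTop (𝓝 pstar) := by
  obtain ⟨z₀, hz₀⟩ := hCne
  have hG : ∀ r, GISConditions (A r) (b r) := fun r => ⟨hA0 r, hArow r, hAcol r, hb0 r, hbsum r⟩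
  have hL : ∀ r, C r = linearFamily (A r) (b r) := hC
  have hmem : ∀ z ∈ ⋂ r, C r, ∀ r, z ∈ linearFamily (A r) (b r) :=
    fun z hz r => hL r ▸ Set.mem_iInter.1 hz r
  have hz0 : ∀ z ∈ ⋂ r, C r, ∀ j, 0 ≤ z j := fun z hz => (hmem z hz ⟨0, hn⟩).1
  have hstep : ∀ (s : Fin n) (k : ℕ), k % n = s →
      IsGISOrProjStep (A s) (b s) (s ∈ I) (p k) (p (k + 1)) := by
    intro s k hk
    obtain rfl : (⟨k % n, Nat.mod_lt k hn⟩ : Fin n) = s := Fin.ext hk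
    refine ⟨hGIS k, fun hkI => ?_⟩
    obtain ⟨hpL, hmin⟩ := hproj k hkI
    rw [hL] at hpL hmin
    exact ⟨hpL, isMinOn_iff.2 hmin⟩
  have hD : ∀ k, IsUniformKLDescent (⋂ r, C r) (p k) (p (k + 1)) := fun k =>
    ((hstep ⟨k % n, Nat.mod_lt k hn⟩ k rfl).isUniformKLDescent (hG _) (hppos k)
      (hppos (k + 1))).mono fun z hz => hmem z hz _
  obtain ⟨x, -, ψ, hψ, hx⟩ := isCompact_Icc.tendsto_subseq fun j =>
    mem_Icc_of_isUniformKLDescent hD hppos hz₀ (hz0 z₀ hz₀) (j * n)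
  have hψn : ∀ s : ℕ, Tendsto (fun j => ψ j * n + s) atTop atTop := fun s =>
    tendsto_atTop_mono (fun j => Nat.le_add_right _ _) (hψ.tendsto_atTop.atTop_mul_const' hn)
  have hxC : x ∈ ⋂ r, C r := mem_iInter_of_tendsto_cyclic (fun s hs => hL s ▸
    IsGISOrProjStep.tendsto (fun _ => hstep s _ (Nat.mul_add_mod_of_lt s.2)) (hG s)
      (fun _ => hppos _) (fun _ => hppos _) hs (hmem z₀ hz₀ s)
      ((tendsto_KL_sub_KL_succ hD hppos hz₀ (hz0 z₀ hz₀)).comp (hψn s))) hx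
  have hlim := tendsto_of_isUniformKLDescent hD hppos hxC (hz0 x hxC) (hψn 0) hx
  refine ⟨x, hxC, fun z hz hne => ?_, hlim⟩
  rw [← hp0]
  exact KL_lt_KL_of_isUniformKLDescent hD hppos hxC (hz0 x hxC) hz (hz0 z hz) hlim hne

/-- Mixed cyclic GIS / exact-information-projection iterations converge to the
unique KL-minimizer over the intersection of the affine sets. -/
theorem stmt0 {M n : ℕ} (hn : 0 < n)
    (q : Fin M → ℝ) (hq : ∀ j, 0 < q j)
    (m : Fin n → ℕ)
    (A : (k : Fin n) → Fin (m k) → Fin M → ℝ) (b : (k : Fin n) → Fin (m k) → ℝ)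
    -- GIS conditions for every k:
    (hA0 : ∀ k i j, 0 ≤ A k i j)
    (hArow : ∀ k i, ∃ j, A k i j ≠ 0)
    (hAcol : ∀ k j, ∑ i, A k i j = 1)
    (hb0 : ∀ k i, 0 < b k i)
    (hbsum : ∀ k, ∑ i, b k i = 1)
    -- the affine constraint sets Cᵏ = {x ∈ Δ_M : Aᵏ x = bᵏ}:
    (C : Fin n → Set (Fin M → ℝ))
    (hC : ∀ k, C k = {x : Fin M → ℝ |
      (∀ j, 0 ≤ x j) ∧ (∑ j, x j = 1) ∧ ∀ i, ∑ j, A k i j * x j = b k i})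
    (hCne : (⋂ k, C k).Nonempty)
    -- the subset of indices for which a GIS step is used:
    (I : Set (Fin n))
    -- the sequence of iterates:
    (p : ℕ → Fin M → ℝ)
    (hp0 : p 0 = q)
    (hppos : ∀ k j, 0 < p k j)
    -- GIS update step, for cyclic constraint indices in I:
    (hGIS : ∀ k : ℕ, (⟨k % n, Nat.mod_lt k hn⟩ : Fin n) ∈ I →
      p (k + 1) = fun j => p k j *
        Real.exp (∑ i, A ⟨k % n, Nat.mod_lt k hn⟩ i j *
          Real.log (b ⟨k % n, Nat.mod_lt k hn⟩ i /
            ∑ j', A ⟨k % n, Nat.mod_lt k hn⟩ i j' * p k j')))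
    -- exact KL-projection step, for cyclic constraint indices not in I:
    (hproj : ∀ k : ℕ, (⟨k % n, Nat.mod_lt k hn⟩ : Fin n) ∉ I →
      p (k + 1) ∈ C ⟨k % n, Nat.mod_lt k hn⟩ ∧
        ∀ z ∈ C ⟨k % n, Nat.mod_lt k hn⟩, KL (p (k + 1)) (p k) ≤ KL z (p k)) :
    ∃ pstar ∈ ⋂ k, C k,
      (∀ z ∈ ⋂ k, C k, z ≠ pstar → KL pstar q < KL z q) ∧
      Tendsto p atTop (𝓝 pstar) :=
  stmt0_general hn q m A b hA0 hArow hAcol hb0 hbsum C hC hCne I p hp0 hppos hGIS hproj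
end

section
/- Let A ∈ ℝ^{m×M} have nonnegative entries with every column of A summing to 1, and let b ∈ ℝ^m have positive entries with Σ_i b_i = 1. Let q ∈ ℝ^M have positive entries and assume (Aq)_i > 0 for every i. Define q' ∈ ℝ^M by q'_j := q_j·exp(Σ_{i=1}^m A_{ij}·log(b_i/(Aq)_i)). Then for every p ∈ ℝ^M with nonnegative entries satisfying Ap = b, the improvement inequality KL(p, q) − KL(p, q') ≥ KL(b, Aq) ≥ 0 holds. -/
/-- The GIS improvement inequality: one GIS step `q ↦ q'` improves the KL
distance to any feasible `p` by at least `KL(b, Aq) ≥ 0`. -/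
theorem stmt2 {m M : ℕ} (A : Fin m → Fin M → ℝ) (b : Fin m → ℝ)
    (hA0 : ∀ i j, 0 ≤ A i j)
    (hAcol : ∀ j, ∑ i, A i j = 1)
    (hb0 : ∀ i, 0 < b i)
    (hbsum : ∑ i, b i = 1)
    (q : Fin M → ℝ) (hq : ∀ j, 0 < q j)
    (hAq : ∀ i, 0 < ∑ j, A i j * q j)
    (q' : Fin M → ℝ)
    (hq' : q' = fun j =>
      q j * Real.exp (∑ i, A i j * Real.log (b i / ∑ j', A i j' * q j'))) :
    ∀ p : Fin M → ℝ, (∀ j, 0 ≤ p j) → (∀ i, ∑ j, A i j * p j = b i) →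
      KL b (fun i => ∑ j, A i j * q j) ≤ KL p q - KL p q' ∧
      0 ≤ KL b (fun i => ∑ j, A i j * q j) := by
  intro p hp hAp
  set c : Fin m → ℝ := fun i => ∑ j', A i j' * q j' with hc
  set L : Fin m → ℝ := fun i => Real.log (b i / c i) with hL
  have hKLb : 0 ≤ KL b c := by
    unfold KL
    apply Finset.sum_nonneg
    intro i _
    have h1 : Real.log (c i / b i) ≤ c i / b i - 1 :=
      Real.log_le_sub_one_of_pos (div_pos (hAq i) (hb0 i))
    have h2 : Real.log (c i / b i) = - Real.log (b i / c i) := by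
      rw [← Real.log_inv, inv_div]
    have hb := hb0 i
    have h3 := mul_le_mul_of_nonneg_left h1 hb.le
    rw [h2] at h3
    have h4 : b i * (c i / b i) = c i := mul_div_cancel₀ (c i) (ne_of_gt hb)
    nlinarith
  refine ⟨?_, hKLb⟩
  -- Jensen: q' j ≤ q j * ∑ i, A i j * (b i / c i)
  have hq'le : ∀ j, q' j ≤ q j * ∑ i, A i j * (b i / c i) := by
    intro j
    rw [hq']
    have hjensen : Real.exp (∑ i, A i j * L i) ≤ ∑ i, A i j * Real.exp (L i) := by
      have := convexOn_exp.map_sum_le (t := Finset.univ) (w := fun i => A i j)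
        (p := L) (fun i _ => hA0 i j) (hAcol j) (fun i _ => Set.mem_univ _)
      simpa [smul_eq_mul] using this
    have hexpL : ∀ i, Real.exp (L i) = b i / c i := by
      intro i; rw [hL]; exact Real.exp_log (div_pos (hb0 i) (hAq i))
    calc q j * Real.exp (∑ i, A i j * L i)
        ≤ q j * ∑ i, A i j * Real.exp (L i) :=
          mul_le_mul_of_nonneg_left hjensen (hq j).le
      _ = q j * ∑ i, A i j * (b i / c i) := by simp_rw [hexpL]
  have hsumq' : ∑ j, q' j ≤ 1 := by
    calc ∑ j, q' j ≤ ∑ j, q j * ∑ i, A i j * (b i / c i) :=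
          Finset.sum_le_sum (fun j _ => hq'le j)
      _ = ∑ i, (b i / c i) * c i := by
          simp_rw [Finset.mul_sum, hc]
          rw [Finset.sum_comm]
          congr 1; ext i
          rw [Finset.mul_sum]
          congr 1; ext j; ring
      _ = ∑ i, b i := by
          congr 1; ext i
          exact div_mul_cancel₀ (b i) (ne_of_gt (hAq i))
      _ = 1 := hbsum
  -- sum of c equals sum of q
  have hsumc : ∑ i, c i = ∑ j, q j := by
    rw [hc]
    rw [Finset.sum_comm]
    congr 1; ext j
    rw [← Finset.sum_mul, hAcol, one_mul]
  -- pointwise log identity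
  have hterm : ∀ j, p j * Real.log (p j / q j) - p j * Real.log (p j / q' j)
      = p j * ∑ i, A i j * L i := by
    intro j
    rcases eq_or_lt_of_le (hp j) with h | h
    · simp [← h]
    · have hq'pos : 0 < q' j := by
        rw [hq']; exact mul_pos (hq j) (Real.exp_pos _)
      have h1 : Real.log (p j / q j) = Real.log (p j) - Real.log (q j) :=
        Real.log_div (ne_of_gt h) (ne_of_gt (hq j))
      have h2 : Real.log (p j / q' j) = Real.log (p j) - Real.log (q' j) :=
        Real.log_div (ne_of_gt h) (ne_of_gt hq'pos)
      have h3 : Real.log (q' j) = Real.log (q j) + ∑ i, A i j * L i := by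
        rw [hq']
        simp only
        rw [Real.log_mul (ne_of_gt (hq j)) (Real.exp_ne_zero _), Real.log_exp]
      rw [h1, h2, h3]; ring
  -- sum p_j S_j = sum b_i L_i
  have hswap : ∑ j, p j * ∑ i, A i j * L i = ∑ i, b i * L i := by
    simp_rw [Finset.mul_sum]
    rw [Finset.sum_comm]
    congr 1; ext i
    rw [← hAp i, Finset.sum_mul]
    congr 1; ext j; ring
  -- main computation
  have key : KL p q - KL p q' = (∑ i, b i * L i) + (∑ j, q j) - (∑ j, q' j) := by
    unfold KL
    rw [← Finset.sum_sub_distrib]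
    have : ∀ j, (p j * Real.log (p j / q j) - p j + q j)
        - (p j * Real.log (p j / q' j) - p j + q' j)
        = p j * ∑ i, A i j * L i + (q j - q' j) := by
      intro j
      have := hterm j
      linarith
    rw [Finset.sum_congr rfl (fun j _ => this j), Finset.sum_add_distrib,
      hswap, Finset.sum_sub_distrib]
    ring
  have keyb : KL b c = (∑ i, b i * L i) - 1 + ∑ j, q j := by
    unfold KL
    rw [Finset.sum_add_distrib, Finset.sum_sub_distrib, hsumc, hbsum]
  rw [key, keyb]
  linarith
end

section
/- Let S ⊆ {1,…,M} be a nonempty subset, let b > 0 be a real number, and let q ∈ ℝ^M have positive entries. Then the function p ↦ KL(p, q) attains a unique minimum over the set {p ∈ ℝ^M : p_j ≥ 0 for all j, Σ_{j∈S} p_j = b}, and the minimizer p* is given by the scaling formula p*_j = q_j · b/(Σ_{s∈S} q_s) for j ∈ S and p*_j = q_j for j ∉ S. -/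
lemma klterm_pos {a c : ℝ} (ha : 0 ≤ a) (hc : 0 < c) (hne : a ≠ c) :
    0 < a * Real.log (a / c) - a + c := by
  rcases eq_or_lt_of_le ha with h0 | h0
  · rw [← h0]; simpa using hc
  · have hx : 0 < c / a := div_pos hc h0
    have h1 : c / a ≠ 1 := fun h => hne ((div_eq_one_iff_eq h0.ne').mp h).symm
    have hlt : Real.log (c / a) < c / a - 1 := Real.log_lt_sub_one_of_pos hx h1
    have hlog : Real.log (a / c) = - Real.log (c / a) := by
      rw [← Real.log_inv, inv_div]
    have hca : a * (c / a) = c := by field_simp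
    nlinarith [hlt, h0, hca]

lemma klterm_nonneg {a c : ℝ} (ha : 0 ≤ a) (hc : 0 < c) :
    0 ≤ a * Real.log (a / c) - a + c := by
  rcases eq_or_ne a c with h | h
  · rw [h, div_self hc.ne', Real.log_one, mul_zero]; linarith
  · exact (klterm_pos ha hc h).le

/-- The KL projection onto `{p ≥ 0 : ∑_{j∈S} pⱼ = b}` is given by scaling the
entries in `S` and leaving the others untouched, and it is the unique
minimizer. -/
theorem stmt4 {M : ℕ} (S : Finset (Fin M)) (hS : S.Nonempty)
    (b : ℝ) (hb : 0 < b)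
    (q : Fin M → ℝ) (hq : ∀ j, 0 < q j)
    (pstar : Fin M → ℝ)
    (hpstar : pstar = fun j => if j ∈ S then q j * (b / ∑ s ∈ S, q s) else q j) :
    pstar ∈ {p : Fin M → ℝ | (∀ j, 0 ≤ p j) ∧ ∑ j ∈ S, p j = b} ∧
    ∀ p ∈ {p : Fin M → ℝ | (∀ j, 0 ≤ p j) ∧ ∑ j ∈ S, p j = b},
      p ≠ pstar → KL pstar q < KL p q := by
  have hQpos : 0 < ∑ s ∈ S, q s := Finset.sum_pos (fun i _ => hq i) hS
  set Q := ∑ s ∈ S, q s with hQdef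
  have hcpos : ∀ j, 0 < pstar j := by
    intro j; rw [hpstar]; dsimp only; split
    · exact mul_pos (hq j) (div_pos hb hQpos)
    · exact hq j
  have hsum : ∑ j ∈ S, pstar j = b := by
    rw [hpstar]
    rw [Finset.sum_congr rfl (fun j hj => if_pos hj), ← Finset.sum_mul]
    rw [← hQdef]; field_simp
  have hratio : ∀ j ∈ S, pstar j / q j = b / Q := by
    intro j hj; rw [hpstar]; dsimp only; rw [if_pos hj]
    exact mul_div_cancel_left₀ _ (hq j).ne'
  refine ⟨⟨fun j => (hcpos j).le, hsum⟩, ?_⟩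
  rintro p ⟨hp0, hpb⟩ hne
  have hdecomp : ∀ j, p j * Real.log (p j / q j) - p j + q j
      = (p j * Real.log (p j / pstar j) - p j + pstar j)
        + ((pstar j * Real.log (pstar j / q j) - pstar j + q j)
        + Real.log (pstar j / q j) * (p j - pstar j)) := by
    intro j
    rcases eq_or_lt_of_le (hp0 j) with h0 | h0
    · rw [← h0]; simp; ring
    · have hmul : p j / pstar j * (pstar j / q j) = p j / q j := by
        rw [div_mul_div_comm, mul_comm (p j), mul_div_mul_left _ _ (hcpos j).ne']
      have h1 : Real.log (p j / q j)
          = Real.log (p j / pstar j) + Real.log (pstar j / q j) := by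
        rw [← hmul, Real.log_mul (div_pos h0 (hcpos j)).ne'
          (div_pos (hcpos j) (hq j)).ne']
      rw [h1]; ring
  have hlin : ∑ j, Real.log (pstar j / q j) * (p j - pstar j) = 0 := by
    have heq : ∀ j, Real.log (pstar j / q j) * (p j - pstar j)
        = if j ∈ S then Real.log (b / Q) * (p j - pstar j) else 0 := by
      intro j
      by_cases hj : j ∈ S
      · rw [if_pos hj, hratio j hj]
      · rw [if_neg hj]
        have hq' : pstar j = q j := by rw [hpstar]; simp [hj]
        rw [hq', div_self (hq j).ne', Real.log_one, zero_mul]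
    rw [Finset.sum_congr rfl (fun j _ => heq j), Finset.sum_ite_mem,
      Finset.univ_inter, ← Finset.mul_sum, Finset.sum_sub_distrib, hpb, hsum,
      sub_self, mul_zero]
  have hbr : 0 < ∑ j, (p j * Real.log (p j / pstar j) - p j + pstar j) := by
    obtain ⟨j0, hj0⟩ : ∃ j, p j ≠ pstar j := by
      by_contra h; push_neg at h; exact hne (funext h)
    exact Finset.sum_pos' (fun j _ => klterm_nonneg (hp0 j) (hcpos j))
      ⟨j0, Finset.mem_univ j0, klterm_pos (hp0 j0) (hcpos j0) hj0⟩
  have hsplit : (∑ j, (p j * Real.log (p j / q j) - p j + q j))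
      = (∑ j, (p j * Real.log (p j / pstar j) - p j + pstar j))
        + ((∑ j, (pstar j * Real.log (pstar j / q j) - pstar j + q j))
        + ∑ j, Real.log (pstar j / q j) * (p j - pstar j)) := by
    rw [← Finset.sum_add_distrib, ← Finset.sum_add_distrib]
    exact Finset.sum_congr rfl fun j _ => hdecomp j
  unfold KL
  rw [hsplit, hlin, add_zero]
  linarith
end

section
/- Let K ∈ ℝ^{M×M} have positive entries, let μ, ν ∈ ℝ^M have positive entries with Σ_i μ_i = Σ_j ν_j = 1, and define the Sinkhorn iterates π^{(0)} := K, π^{(2l−1)}_{ij} := π^{(2l−2)}_{ij}·μ_i/(Σ_s π^{(2l−2)}_{is}), and π^{(2l)}_{ij} := π^{(2l−1)}_{ij}·ν_j/(Σ_s π^{(2l−1)}_{sj}) for l ≥ 1. Then for every π ∈ Π(μ, ν) and every l ≥ 1, KL(π, π^{(2l−2)}) − KL(π, π^{(2l)}) ≥ KL(μ, r^{(2l−2)}) + KL(ν, c^{(2l−1)}), where r^{(2l−2)}_i := Σ_j π^{(2l−2)}_{ij} and c^{(2l−1)}_j := Σ_i π^{(2l−1)}_{ij}. -/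
/-- Kullback--Leibler divergence of two nonnegative `M×M` matrices. -/
noncomputable def KL2 {M : ℕ} (p q : Fin M → Fin M → ℝ) : ℝ :=
  ∑ i, ∑ j, (p i j * Real.log (p i j / q i j) - p i j + q i j)

/-- The Sinkhorn iterates: `π⁽⁰⁾ = K`, odd steps rescale the rows to have row
sums `μ`, even steps rescale the columns to have column sums `ν`. -/
noncomputable def sinkhorn {M : ℕ} (K : Fin M → Fin M → ℝ) (μ ν : Fin M → ℝ) :
    ℕ → Fin M → Fin M → ℝ :=
  fun k => Nat.rec K
    (fun n prev =>
      if n % 2 = 0 then fun i j => prev i j * μ i / (∑ s, prev i s)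
      else fun i j => prev i j * ν j / (∑ s, prev s j)) k

open Function

section Normalize

variable {ι κ : Type*}

noncomputable def rowNormalize [Fintype κ] (p : ι → κ → ℝ) (μ : ι → ℝ) : ι → κ → ℝ :=
  fun i j => p i j * μ i / ∑ s, p i s

noncomputable def colNormalize [Fintype ι] (p : ι → κ → ℝ) (ν : κ → ℝ) : ι → κ → ℝ :=
  fun i j => p i j * ν j / ∑ s, p s j

theorem swap_colNormalize [Fintype ι] (p : ι → κ → ℝ) (ν : κ → ℝ) :
    swap (colNormalize p ν) = rowNormalize (swap p) ν :=
  rfl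

theorem rowNormalize_pos [Fintype κ] {p : ι → κ → ℝ} {μ : ι → ℝ} (hp : ∀ i j, 0 < p i j)
    (hμ : ∀ i, 0 < μ i) (i : ι) (j : κ) : 0 < rowNormalize p μ i j :=
  div_pos (mul_pos (hp i j) (hμ i)) (Finset.sum_pos (fun s _ => hp i s) ⟨j, Finset.mem_univ j⟩)

theorem colNormalize_pos [Fintype ι] {p : ι → κ → ℝ} {ν : κ → ℝ} (hp : ∀ i j, 0 < p i j)
    (hν : ∀ j, 0 < ν j) (i : ι) (j : κ) : 0 < colNormalize p ν i j :=
  rowNormalize_pos (p := swap p) (fun j i => hp i j) hν j i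

end Normalize

theorem KL_sub_KL_const_mul {ι : Type*} [Fintype ι] (x : ι → ℝ) {y : ι → ℝ}
    (hy : ∀ j, y j ≠ 0) {c : ℝ} (hc : c ≠ 0) :
    KL x y - KL x (fun j => c * y j) = (∑ j, x j) * Real.log c - (c - 1) * ∑ j, y j := by
  rw [KL, KL, ← Finset.sum_sub_distrib, Finset.sum_mul, Finset.mul_sum, ← Finset.sum_sub_distrib]
  refine Finset.sum_congr rfl fun j _ => ?_
  rcases eq_or_ne (x j) 0 with hx | hx
  · simp only [hx, zero_div, Real.log_zero, mul_zero, zero_mul, sub_zero]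
    ring
  · rw [mul_comm c, ← div_div, Real.log_div (div_ne_zero hx (hy j)) hc]
    ring

section KL2

variable {M : ℕ}

theorem KL2_eq_sum_KL (π p : Fin M → Fin M → ℝ) : KL2 π p = ∑ i, KL (π i) (p i) :=
  rfl

theorem KL2_swap (π p : Fin M → Fin M → ℝ) : KL2 π p = KL2 (swap π) (swap p) :=
  Finset.sum_comm

theorem KL2_sub_KL2_rowNormalize {π p : Fin M → Fin M → ℝ} {μ : Fin M → ℝ}
    (hp : ∀ i j, 0 < p i j) (hμ : ∀ i, μ i ≠ 0) (hπ : ∀ i, ∑ j, π i j = μ i) :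
    KL2 π p - KL2 π (rowNormalize p μ) = KL μ (fun i => ∑ j, p i j) := by
  have hr : ∀ i, 0 < ∑ j, p i j :=
    fun i => Finset.sum_pos (fun j _ => hp i j) ⟨i, Finset.mem_univ i⟩
  have hrow : ∀ i, rowNormalize p μ i = fun j => μ i / (∑ s, p i s) * p i j :=
    fun i => funext fun j => by rw [rowNormalize, mul_div_assoc, mul_comm, div_mul_eq_mul_div]
  rw [KL2_eq_sum_KL, KL2_eq_sum_KL, ← Finset.sum_sub_distrib, KL]
  refine Finset.sum_congr rfl fun i _ => ?_
  rw [hrow, KL_sub_KL_const_mul _ (fun j => (hp i j).ne') (div_ne_zero (hμ i) (hr i).ne'), hπ i,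
    sub_one_mul, div_mul_cancel₀ _ (hr i).ne']
  ring

theorem KL2_sub_KL2_colNormalize {π p : Fin M → Fin M → ℝ} {ν : Fin M → ℝ}
    (hp : ∀ i j, 0 < p i j) (hν : ∀ j, ν j ≠ 0) (hπ : ∀ j, ∑ i, π i j = ν j) :
    KL2 π p - KL2 π (colNormalize p ν) = KL ν (fun j => ∑ i, p i j) := by
  rw [KL2_swap π p, KL2_swap π (colNormalize p ν), swap_colNormalize]
  exact KL2_sub_KL2_rowNormalize (fun j i => hp i j) hν hπ

end KL2

section Sinkhorn

variable {M : ℕ} (K : Fin M → Fin M → ℝ) (μ ν : Fin M → ℝ)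

theorem sinkhorn_succ (n : ℕ) :
    sinkhorn K μ ν (n + 1) =
      if n % 2 = 0 then rowNormalize (sinkhorn K μ ν n) μ
      else colNormalize (sinkhorn K μ ν n) ν :=
  rfl

theorem sinkhorn_two_mul_add_one (l : ℕ) :
    sinkhorn K μ ν (2 * l + 1) = rowNormalize (sinkhorn K μ ν (2 * l)) μ := by
  rw [sinkhorn_succ, if_pos (Nat.mul_mod_right 2 l)]

theorem sinkhorn_two_mul_add_two (l : ℕ) :
    sinkhorn K μ ν (2 * l + 2) = colNormalize (sinkhorn K μ ν (2 * l + 1)) ν := by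
  rw [sinkhorn_succ, if_neg (by omega)]

variable {K μ ν}

theorem sinkhorn_pos (hK : ∀ i j, 0 < K i j) (hμ : ∀ i, 0 < μ i) (hν : ∀ j, 0 < ν j) (k : ℕ) :
    ∀ i j, 0 < sinkhorn K μ ν k i j := by
  induction k with
  | zero => exact hK
  | succ n ih =>
    rw [sinkhorn_succ]
    split
    · exact rowNormalize_pos ih hμ
    · exact colNormalize_pos ih hν

end Sinkhorn

theorem stmt7_general {M : ℕ} (K : Fin M → Fin M → ℝ) (hK : ∀ i j, 0 < K i j)
    (μ ν : Fin M → ℝ) (hμ : ∀ i, 0 < μ i) (hν : ∀ j, 0 < ν j) :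
    ∀ π : Fin M → Fin M → ℝ,
      (∀ i j, 0 ≤ π i j) → (∀ i, ∑ j, π i j = μ i) → (∀ j, ∑ i, π i j = ν j) →
      ∀ l : ℕ,
        KL μ (fun i => ∑ j, sinkhorn K μ ν (2 * l) i j) +
            KL ν (fun j => ∑ i, sinkhorn K μ ν (2 * l + 1) i j) ≤
          KL2 π (sinkhorn K μ ν (2 * l)) -
            KL2 π (sinkhorn K μ ν (2 * l + 2)) := by
  intro π _ hrow hcol l
  rw [← KL2_sub_KL2_rowNormalize (sinkhorn_pos hK hμ hν (2 * l)) (fun i => (hμ i).ne') hrow,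
    ← sinkhorn_two_mul_add_one,
    ← KL2_sub_KL2_colNormalize (sinkhorn_pos hK hμ hν (2 * l + 1)) (fun j => (hν j).ne') hcol,
    ← sinkhorn_two_mul_add_two]
  linarith

/-- The improvement inequality for one full Sinkhorn cycle: for every
`π ∈ Π(μ, ν)` and every `l ≥ 1` (here written with `l - 1 : ℕ` as the free
variable, so the three iterates are `π⁽²ˡ⁻²⁾, π⁽²ˡ⁻¹⁾, π⁽²ˡ⁾`),
`KL(π, π⁽²ˡ⁻²⁾) − KL(π, π⁽²ˡ⁾) ≥ KL(μ, r⁽²ˡ⁻²⁾) + KL(ν, c⁽²ˡ⁻¹⁾)`. -/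
theorem stmt7 {M : ℕ} (K : Fin M → Fin M → ℝ) (hK : ∀ i j, 0 < K i j)
    (μ ν : Fin M → ℝ) (hμ : ∀ i, 0 < μ i) (hν : ∀ j, 0 < ν j)
    (hμs : ∑ i, μ i = 1) (hνs : ∑ j, ν j = 1) :
    ∀ π : Fin M → Fin M → ℝ,
      (∀ i j, 0 ≤ π i j) → (∀ i, ∑ j, π i j = μ i) → (∀ j, ∑ i, π i j = ν j) →
      ∀ l : ℕ,
        KL μ (fun i => ∑ j, sinkhorn K μ ν (2 * l) i j) +
            KL ν (fun j => ∑ i, sinkhorn K μ ν (2 * l + 1) i j) ≤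
          KL2 π (sinkhorn K μ ν (2 * l)) -
            KL2 π (sinkhorn K μ ν (2 * l + 2)) :=
  stmt7_general K hK μ ν hμ hν
end

section
/- Let A ∈ ℝ^{m×M} have nonnegative entries with every column summing to 1, let b ∈ ℝ^m have positive entries with Σ_i b_i = 1, and let q ∈ ℝ^M have positive entries with (Aq)_i > 0 for all i. Define q̃ ∈ ℝ^{m×M} by q̃_{ij} := A_{ij}·q_j·b_i/(Aq)_i, the GIS iterate q'_j := q_j·exp(Σ_{i=1}^m A_{ij}·log(b_i/(Aq)_i)), and the lifting F(p) ∈ ℝ^{m×M}, F(p)_{ij} := A_{ij}·p_j. Then: (i) Σ_{i,j} q̃_{ij} = 1; (ii) for every p ∈ Δ_M, KL(F(p), q̃) = KL(p, q') + 1 − Σ_{j=1}^M q'_j; (iii) consequently, the unique minimizer of p ↦ KL(F(p), q̃) over p ∈ Δ_M is the normalized GIS iterate q'/(Σ_{j=1}^M q'_j). -/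
/-- The probability simplex in `ℝ^M`. -/
def simplex (M : ℕ) : Set (Fin M → ℝ) :=
  {x | (∀ j, 0 ≤ x j) ∧ ∑ j, x j = 1}


open Real Finset
open InformationTheory (klFun klFun_apply klFun_nonneg klFun_eq_zero_iff)

section KL

variable {ι : Type*} [Fintype ι]

theorem KL_eq_sum_mul_log_sub_add (p q : ι → ℝ) :
    KL p q = ∑ j, p j * log (p j / q j) - ∑ j, p j + ∑ j, q j := by
  rw [KL, sum_add_distrib, sum_sub_distrib]

theorem KL_eq_sum_mul_klFun {p q : ι → ℝ} (hq : ∀ j, q j ≠ 0) :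
    KL p q = ∑ j, q j * klFun (p j / q j) := by
  refine sum_congr rfl fun j _ => ?_
  rw [klFun_apply]
  field_simp [hq j]
  ring

theorem KL_pos_of_ne {p q : ι → ℝ} (hp : ∀ j, 0 ≤ p j) (hq : ∀ j, 0 < q j) (hne : p ≠ q) :
    0 < KL p q := by
  rw [KL_eq_sum_mul_klFun fun j => (hq j).ne']
  have hratio : ∀ j, 0 ≤ p j / q j := fun j => div_nonneg (hp j) (hq j).le
  obtain ⟨j, hj⟩ := Function.ne_iff.mp hne
  refine sum_pos' (fun j _ => mul_nonneg (hq j).le (klFun_nonneg (hratio j))) ⟨j, mem_univ j, ?_⟩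
  refine mul_pos (hq j) ((klFun_nonneg (hratio j)).lt_of_ne' ?_)
  rw [Ne, klFun_eq_zero_iff (hratio j), div_eq_one_iff_eq (hq j).ne']
  exact hj

/-- Pythagorean identity: the normalization of `q` is its KL-projection onto the simplex. -/
theorem KL_eq_KL_div_sum_add {p q : ι → ℝ} (hp : ∑ j, p j = 1) (hq : ∀ j, q j ≠ 0)
    (hS : ∑ j, q j ≠ 0) :
    KL p q = KL p (fun j => q j / ∑ j', q j') + KL (fun j => q j / ∑ j', q j') q := by
  set S := ∑ j, q j
  have hratio : ∀ j, q j / S / q j = S⁻¹ := fun j => by field_simp [hq j]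
  have hlog : ∀ j, p j * log (p j / q j) = p j * log (p j / (q j / S)) + p j * log S⁻¹ := by
    intro j
    rcases eq_or_ne (p j) 0 with h | h
    · simp [h]
    rw [← hratio j, ← mul_add, ← log_mul (div_ne_zero h (div_ne_zero (hq j) hS))
      (div_ne_zero (div_ne_zero (hq j) hS) (hq j)), div_mul_div_cancel₀ (div_ne_zero (hq j) hS)]
  have hsum : ∑ j, q j / S = 1 := by rw [← sum_div, div_self hS]
  simp only [KL_eq_sum_mul_log_sub_add, hlog, hratio, sum_add_distrib, ← sum_mul, hp, hsum]
  ring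

theorem KL_div_sum_lt_of_ne {p q : ι → ℝ} (hp0 : ∀ j, 0 ≤ p j) (hp1 : ∑ j, p j = 1)
    (hq : ∀ j, 0 < q j) (hne : p ≠ fun j => q j / ∑ j', q j') :
    KL (fun j => q j / ∑ j', q j') q < KL p q := by
  have : Nonempty ι := by
    obtain ⟨j, -, -⟩ := exists_ne_zero_of_sum_ne_zero (hp1 ▸ one_ne_zero : ∑ j, p j ≠ 0)
    exact ⟨j⟩
  have hS : 0 < ∑ j, q j := sum_pos (fun j _ => hq j) univ_nonempty
  rw [KL_eq_KL_div_sum_add hp1 (fun j => (hq j).ne') hS.ne']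
  linarith [KL_pos_of_ne hp0 (fun j => div_pos (hq j) hS) hne]

end KL

section Lift

variable {ι κ : Type*} [Fintype ι] [Fintype κ]

theorem sum_prod_mul_eq_sum_of_sum_col_eq_one {A : ι → κ → ℝ} (hA : ∀ j, ∑ i, A i j = 1)
    (x : κ → ℝ) : ∑ ij : ι × κ, A ij.1 ij.2 * x ij.2 = ∑ j, x j := by
  simp only [Fintype.sum_prod_type_right, ← sum_mul, hA, one_mul]

theorem sum_prod_mul_mul_div_rowSum (A : ι → κ → ℝ) (b : ι → ℝ) {q : κ → ℝ}
    (hAq : ∀ i, ∑ j, A i j * q j ≠ 0) :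
    ∑ ij : ι × κ, A ij.1 ij.2 * q ij.2 * (b ij.1 / ∑ j, A ij.1 j * q j) = ∑ i, b i := by
  rw [Fintype.sum_prod_type]
  refine sum_congr rfl fun i _ => ?_
  dsimp only
  rw [← sum_mul, mul_div_cancel₀ _ (hAq i)]

theorem mul_log_div_mul_exp (p s : ℝ) {q : ℝ} (hq : q ≠ 0) :
    p * log (p / (q * exp s)) = p * log (p / q) - p * s := by
  rcases eq_or_ne p 0 with rfl | hp
  · simp
  rw [← div_div, log_div (div_ne_zero hp hq) (exp_ne_zero s), log_exp, mul_sub]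

theorem mul_log_div_mul_mul (a p : ℝ) {q c : ℝ} (hq : q ≠ 0) (hc : c ≠ 0) :
    a * p * log (a * p / (a * q * c)) = a * (p * log (p / q)) - a * p * log c := by
  rcases eq_or_ne a 0 with rfl | ha
  · simp
  rcases eq_or_ne p 0 with rfl | hp
  · simp
  rw [mul_assoc a q, mul_div_mul_left _ _ ha, ← div_div, log_div (div_ne_zero hp hq) hc]
  ring

theorem KL_lift_eq (A : ι → κ → ℝ) (hA : ∀ j, ∑ i, A i j = 1) {q : κ → ℝ} {c : ι → ℝ}
    (hq : ∀ j, q j ≠ 0) (hc : ∀ i, c i ≠ 0) (p : κ → ℝ) :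
    KL (fun ij : ι × κ => A ij.1 ij.2 * p ij.2) (fun ij => A ij.1 ij.2 * q ij.2 * c ij.1) =
      KL p (fun j => q j * exp (∑ i, A i j * log (c i))) +
        ∑ ij : ι × κ, A ij.1 ij.2 * q ij.2 * c ij.1 -
          ∑ j, q j * exp (∑ i, A i j * log (c i)) := by
  have hcross : ∑ ij : ι × κ, A ij.1 ij.2 * p ij.2 * log (c ij.1) =
      ∑ j, p j * ∑ i, A i j * log (c i) := by
    simp only [Fintype.sum_prod_type_right, mul_sum]
    exact sum_congr rfl fun j _ => sum_congr rfl fun i _ => by ring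
  simp only [KL_eq_sum_mul_log_sub_add, mul_log_div_mul_mul _ _ (hq _) (hc _),
    mul_log_div_mul_exp _ _ (hq _), sum_sub_distrib, hcross,
    sum_prod_mul_eq_sum_of_sum_col_eq_one hA p,
    sum_prod_mul_eq_sum_of_sum_col_eq_one hA fun j => p j * log (p j / q j)]
  ring

end Lift

theorem div_sum_mem_simplex {M : ℕ} {q : Fin M → ℝ} (hq : ∀ j, 0 ≤ q j) (hS : 0 < ∑ j, q j) :
    (fun j => q j / ∑ j', q j') ∈ simplex M :=
  ⟨fun j => div_nonneg (hq j) hS.le, by rw [← sum_div, div_self hS.ne']⟩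

theorem stmt9_general {m M : ℕ} (A : Fin m → Fin M → ℝ) (b : Fin m → ℝ)
    (hAcol : ∀ j, ∑ i, A i j = 1)
    (hb0 : ∀ i, 0 < b i)
    (hbsum : ∑ i, b i = 1)
    (q : Fin M → ℝ) (hq : ∀ j, 0 < q j)
    (hAq : ∀ i, 0 < ∑ j, A i j * q j)
    (qt : Fin m × Fin M → ℝ)
    (hqt : qt = fun ij => A ij.1 ij.2 * q ij.2 * (b ij.1 / ∑ j, A ij.1 j * q j))
    (q' : Fin M → ℝ)
    (hq' : q' = fun j =>
      q j * Real.exp (∑ i, A i j * Real.log (b i / ∑ j', A i j' * q j')))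
    (F : (Fin M → ℝ) → Fin m × Fin M → ℝ)
    (hF : F = fun p ij => A ij.1 ij.2 * p ij.2) :
    (∑ ij : Fin m × Fin M, qt ij = 1) ∧
    (∀ p ∈ simplex M, KL (F p) qt = KL p q' + 1 - ∑ j, q' j) ∧
    ((fun j => q' j / ∑ j', q' j') ∈ simplex M ∧
      ∀ p ∈ simplex M, p ≠ (fun j => q' j / ∑ j', q' j') →
        KL (F (fun j => q' j / ∑ j', q' j')) qt < KL (F p) qt) := by
  have hqt_sum : ∑ ij, qt ij = 1 := by
    rw [hqt, sum_prod_mul_mul_div_rowSum A b fun i => (hAq i).ne', hbsum]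
  have hlift : ∀ p, KL (F p) qt = KL p q' + 1 - ∑ j, q' j := fun p => by
    rw [← hqt_sum, hF, hqt, hq']
    exact KL_lift_eq A hAcol (fun j => (hq j).ne') (fun i => (div_pos (hb0 i) (hAq i)).ne') p
  have hq'_pos : ∀ j, 0 < q' j := fun j => hq' ▸ mul_pos (hq j) (exp_pos _)
  obtain ⟨i, -, -⟩ := exists_ne_zero_of_sum_ne_zero (hbsum ▸ one_ne_zero : ∑ i, b i ≠ 0)
  obtain ⟨j, -, -⟩ := exists_ne_zero_of_sum_ne_zero (hAq i).ne'
  have hS : 0 < ∑ j, q' j := sum_pos (fun j _ => hq'_pos j) ⟨j, mem_univ j⟩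
  refine ⟨hqt_sum, fun p _ => hlift p, div_sum_mem_simplex (fun j => (hq'_pos j).le) hS,
    fun p hp hne => ?_⟩
  rw [hlift, hlift]
  linarith [KL_div_sum_lt_of_ne hp.1 hp.2 hq'_pos hne]

/-- The GIS step as a two-step projection: with
`q̃ᵢⱼ = Aᵢⱼ qⱼ bᵢ/(Aq)ᵢ`, the GIS iterate `q'` and the lifting
`F(p)ᵢⱼ = Aᵢⱼ pⱼ`, we have (i) `∑ᵢⱼ q̃ᵢⱼ = 1`, (ii) for `p ∈ Δ_M`,
`KL(F(p), q̃) = KL(p, q') + 1 − ∑ⱼ q'ⱼ`, and (iii) the unique minimizer of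
`p ↦ KL(F(p), q̃)` over `Δ_M` is the normalized GIS iterate. -/
theorem stmt9 {m M : ℕ} (A : Fin m → Fin M → ℝ) (b : Fin m → ℝ)
    (hA0 : ∀ i j, 0 ≤ A i j)
    (hAcol : ∀ j, ∑ i, A i j = 1)
    (hb0 : ∀ i, 0 < b i)
    (hbsum : ∑ i, b i = 1)
    (q : Fin M → ℝ) (hq : ∀ j, 0 < q j)
    (hAq : ∀ i, 0 < ∑ j, A i j * q j)
    (qt : Fin m × Fin M → ℝ)
    (hqt : qt = fun ij => A ij.1 ij.2 * q ij.2 * (b ij.1 / ∑ j, A ij.1 j * q j))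
    (q' : Fin M → ℝ)
    (hq' : q' = fun j =>
      q j * Real.exp (∑ i, A i j * Real.log (b i / ∑ j', A i j' * q j')))
    (F : (Fin M → ℝ) → Fin m × Fin M → ℝ)
    (hF : F = fun p ij => A ij.1 ij.2 * p ij.2) :
    (∑ ij : Fin m × Fin M, qt ij = 1) ∧
    (∀ p ∈ simplex M, KL (F p) qt = KL p q' + 1 - ∑ j, q' j) ∧
    ((fun j => q' j / ∑ j', q' j') ∈ simplex M ∧
      ∀ p ∈ simplex M, p ≠ (fun j => q' j / ∑ j', q' j') →
        KL (F (fun j => q' j / ∑ j', q' j')) qt < KL (F p) qt) :=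
  stmt9_general A b hAcol hb0 hbsum q hq hAq qt hqt q' hq' F hF
end

section
/- Fix points x_1,…,x_M ∈ ℝ^d, weights μ ∈ ℝ^M with positive entries and Σ_i μ_i = 1, and ν ∈ ℝ^M with nonnegative entries and Σ_j ν_j = 1. Let c : ℝ^d × ℝ^d → ℝ be convex in its second argument, and let V(μ, ν) be the barycentric weak OT value. Let U ⊆ ℝ^d be an open set containing the convex hull of {x_1,…,x_M}. For each n ∈ ℕ let Y_n = {y_1^n,…,y_{N(n)}^n} ⊂ ℝ^d be a finite set with U contained in the convex hull of Y_n, and assume sup_{a∈U} min_{y∈Y_n} ‖a − y‖ → 0 as n → ∞. For each n let (π̂^{x,n}, π̂^{y,n}) be an optimal solution of the relaxed problem with respect to Y_n, and set m̂_i^n := (1/μ_i)·Σ_{j=1}^M π̂^{x,n}_{ij}·x_j. Then lim_{n→∞} Σ_{i=1}^M μ_i·c(x_i, m̂_i^n) = lim_{n→∞} Σ_{i,k} π̂^{y,n}_{ik}·c(x_i, y_k^n) = V(μ, ν). -/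
/-!
Jensen's inequality for `c (xᵢ) ·` bounds the barycentric cost of `π̂ˣⁿ` by the relaxed cost,
and the former is at least `V` because `π̂ˣⁿ` is a coupling. Conversely, let `π` be an optimal
coupling (the couplings form a compact set). Once `Yₙ` is an `η`-net of `U`, every barycenter
`mᵢ` of `π` is a convex combination of grid points within `2η` of `mᵢ`, so `π` extends to a
feasible pair of the relaxed problem whose cost exceeds `V` by at most the oscillation of
`c (xᵢ) ·` on `closedBall mᵢ (2η)`. Optimality of `π̂ʸⁿ` and a squeeze give both limits.
-/

open Filter Topology

/-- The set of couplings of `μ` and `ν`. -/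
def PiSet {M : ℕ} (μ ν : Fin M → ℝ) : Set (Fin M → Fin M → ℝ) :=
  {π | (∀ i j, 0 ≤ π i j) ∧ (∀ i, ∑ j, π i j = μ i) ∧ (∀ j, ∑ i, π i j = ν j)}

open Metric

section ConvexHull

theorem exists_weights_of_mem_convexHull_image {E ι : Type*} [AddCommGroup E] [Module ℝ E]
    [Fintype ι] {y : ι → E} {t : Set ι} {a : E} (ha : a ∈ convexHull ℝ (y '' t)) :
    ∃ w : ι → ℝ, (∀ k, 0 ≤ w k) ∧ ∑ k, w k = 1 ∧ ∑ k, w k • y k = a ∧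
      ∀ k, w k ≠ 0 → k ∈ t := by
  classical
  obtain ⟨κ, _, w, z, hw0, hw1, hz, rfl⟩ := mem_convexHull_iff_exists_fintype.1 ha
  choose g hgt hgz using hz
  refine ⟨fun k => ∑ i with g i = k, w i, fun k => Finset.sum_nonneg fun i _ => hw0 i,
    (Finset.sum_fiberwise _ g w).trans hw1, ?_, fun k hk => ?_⟩
  · calc ∑ k, (∑ i with g i = k, w i) • y k
        = ∑ k, ∑ i with g i = k, w i • y (g i) := by
          refine Finset.sum_congr rfl fun k _ => ?_
          rw [Finset.sum_smul]
          exact Finset.sum_congr rfl fun i hi => by rw [(Finset.mem_filter.1 hi).2]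
      _ = ∑ i, w i • z i := by
          rw [Finset.sum_fiberwise _ g fun i => w i • y (g i)]
          simp_rw [hgz]
  · obtain ⟨i, hi, -⟩ := Finset.exists_ne_zero_of_sum_ne_zero hk
    exact (Finset.mem_filter.1 hi).2 ▸ hgt i

variable {E : Type*} [NormedAddCommGroup E] [InnerProductSpace ℝ E] [CompleteSpace E]

open RealInnerProductSpace in
theorem mem_convexHull_inter_closedBall_of_net {S : Set E} (hS : S.Finite) {a : E} {ε : ℝ}
    (hε : 0 ≤ ε) (hnet : ∀ b ∈ closedBall a ε, ∃ s ∈ S, dist b s ≤ ε) :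
    a ∈ convexHull ℝ (S ∩ closedBall a (2 * ε)) := by
  by_contra ha
  obtain ⟨f, u, hfu, hua⟩ := geometric_hahn_banach_closed_point (convex_convexHull ℝ _)
    ((hS.inter_of_left _).isClosed_convexHull (𝕜 := ℝ)) ha
  set v := (InnerProductSpace.toDual ℝ E).symm f
  have hfv : ∀ z, f z = ⟪v, z⟫ := fun z => InnerProductSpace.toDual_symm_apply.symm
  -- Push `a` by `ε` along the normal `v` of a hyperplane separating it from the hull: a grid
  -- point `ε`-close to the new point `b` is `2ε`-close to `a` but on the far side.
  set b := a + (ε / ‖v‖) • v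
  have hba : ‖b - a‖ ≤ ε := by
    rcases eq_or_ne v 0 with hv | hv
    · simpa [b, hv] using hε
    · rw [add_sub_cancel_left, norm_smul, Real.norm_of_nonneg (by positivity),
        div_mul_cancel₀ _ (norm_ne_zero_iff.2 hv)]
  have hvba : ⟪v, b - a⟫ = ε * ‖v‖ := by
    rcases eq_or_ne v 0 with hv | hv
    · simp [hv]
    · rw [add_sub_cancel_left, real_inner_smul_right, real_inner_self_eq_norm_sq]
      field_simp
  obtain ⟨s, hsS, hbs⟩ := hnet b (mem_closedBall_iff_norm.2 hba)
  have hsa : s ∈ closedBall a (2 * ε) := by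
    rw [mem_closedBall]
    linarith [dist_triangle s b a, dist_comm b s, dist_eq_norm b a]
  have hvsb : -(‖v‖ * ε) ≤ ⟪v, s - b⟫ := by
    have := (abs_le.1 ((abs_real_inner_le_norm v (s - b)).trans
      (mul_le_mul_of_nonneg_left ((dist_eq_norm s b).symm.trans_le (dist_comm s b ▸ hbs))
        (norm_nonneg v)))).1
    linarith
  have hfsa : f s - f a = ⟪v, s - b⟫ + ⟪v, b - a⟫ := by
    rw [hfv, hfv, ← inner_sub_right, ← inner_add_right, sub_add_sub_cancel]
  linarith [hfu s (subset_convexHull ℝ _ ⟨hsS, hsa⟩)]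

theorem exists_weights_near_of_net {ι : Type*} [Fintype ι] (y : ι → E) {a : E} {ε : ℝ}
    (hε : 0 ≤ ε) (hnet : ∀ b ∈ closedBall a ε, ∃ k, dist b (y k) ≤ ε) :
    ∃ w : ι → ℝ, (∀ k, 0 ≤ w k) ∧ ∑ k, w k = 1 ∧ ∑ k, w k • y k = a ∧
      ∀ k, w k ≠ 0 → y k ∈ closedBall a (2 * ε) := by
  refine exists_weights_of_mem_convexHull_image (t := y ⁻¹' closedBall a (2 * ε)) ?_
  rw [Set.image_preimage_eq_range_inter]
  refine mem_convexHull_inter_closedBall_of_net (Set.finite_range y) hε fun b hb => ?_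
  obtain ⟨k, hk⟩ := hnet b hb
  exact ⟨y k, Set.mem_range_self k, hk⟩

end ConvexHull

theorem exists_pos_forall_closedBall_subset {X ι : Type*} [PseudoMetricSpace X] [Finite ι]
    {m : ι → X} {W : ι → Set X} (hW : ∀ i, W i ∈ 𝓝 (m i)) :
    ∃ r > 0, ∀ i, closedBall (m i) r ⊆ W i := by
  obtain ⟨r, hrW, hr⟩ := ((eventually_nhdsWithin_of_eventually_nhds
    (eventually_all.2 fun i => eventually_closedBall_subset (hW i))).and
      (self_mem_nhdsWithin (s := Set.Ioi (0 : ℝ)))).exists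
  exact ⟨r, hr, hrW⟩

theorem tendsto_of_forall_le_of_eventually_le_add {α : Type*} {l : Filter α} {f : α → ℝ}
    {a : ℝ} (hle : ∀ n, a ≤ f n) (h : ∀ ε > 0, ∀ᶠ n in l, f n ≤ a + ε) :
    Tendsto f l (𝓝 a) :=
  tendsto_order.2 ⟨fun _ hb => Eventually.of_forall fun n => hb.trans_le (hle n),
    fun b hb => (h _ (half_pos (sub_pos.2 hb))).mono fun n hn => by linarith⟩

theorem isClosed_piSet {M : ℕ} (μ ν : Fin M → ℝ) : IsClosed (PiSet μ ν) := by
  simp only [PiSet, Set.ofPred_and, Set.ofPred_forall]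
  exact (isClosed_iInter fun i => isClosed_iInter fun j =>
    isClosed_le continuous_const (continuous_apply_apply i j)).inter
      ((isClosed_iInter fun i => isClosed_eq (by fun_prop) continuous_const).inter
        (isClosed_iInter fun j => isClosed_eq (by fun_prop) continuous_const))

theorem isCompact_piSet {M : ℕ} (μ ν : Fin M → ℝ) : IsCompact (PiSet μ ν) := by
  refine (isCompact_univ_pi fun i => isCompact_univ_pi fun _ => isCompact_Icc (a := 0)
    (b := μ i)).of_isClosed_subset (isClosed_piSet μ ν) ?_
  rintro π ⟨hπ0, hπμ, -⟩ i - j -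
  exact ⟨hπ0 i j, hπμ i ▸ Finset.single_le_sum (fun j _ => hπ0 i j) (Finset.mem_univ j)⟩

section Relaxation

variable {E : Type*} [NormedAddCommGroup E] [NormedSpace ℝ E] {M : ℕ}
  {μ ν : Fin M → ℝ} {x : Fin M → E} {c : E → E → ℝ}

noncomputable def rowBarycenter (μ : Fin M → ℝ) (x : Fin M → E) (π : Fin M → Fin M → ℝ)
    (i : Fin M) : E :=
  (μ i)⁻¹ • ∑ j, π i j • x j

noncomputable def barycentricCost (μ : Fin M → ℝ) (x : Fin M → E) (c : E → E → ℝ)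
    (π : Fin M → Fin M → ℝ) : ℝ :=
  ∑ i, μ i * c (x i) (rowBarycenter μ x π i)

def relaxedCost {ι : Type*} [Fintype ι] (x : Fin M → E) (c : E → E → ℝ) (y : ι → E)
    (σ : Fin M → ι → ℝ) : ℝ :=
  ∑ i, ∑ k, σ i k * c (x i) (y k)

def IsRelaxedCoupling {ι : Type*} [Fintype ι] (μ ν : Fin M → ℝ) (x : Fin M → E) (y : ι → E)
    (πx : Fin M → Fin M → ℝ) (πy : Fin M → ι → ℝ) : Prop :=
  πx ∈ PiSet μ ν ∧ (∀ i k, 0 ≤ πy i k) ∧ (∀ i, ∑ k, πy i k = μ i) ∧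
    ∀ i, ∑ j, πx i j • x j = ∑ k, πy i k • y k

theorem continuous_barycentricCost (hc : ∀ a, Continuous (c a)) :
    Continuous (barycentricCost μ x c) :=
  continuous_finsetSum _ fun i _ => continuous_const.mul ((hc (x i)).comp (by
    unfold rowBarycenter; fun_prop))

theorem isLeast_sInf_barycentricCost (hc : ∀ a, Continuous (c a)) (hne : (PiSet μ ν).Nonempty) :
    IsLeast (barycentricCost μ x c '' PiSet μ ν) (sInf (barycentricCost μ x c '' PiSet μ ν)) :=
  ((isCompact_piSet μ ν).image (continuous_barycentricCost hc)).isLeast_sInf (hne.image _)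

theorem rowBarycenter_mem_convexHull {π : Fin M → Fin M → ℝ} (hπ : π ∈ PiSet μ ν) {i : Fin M}
    (hμ : 0 < μ i) : rowBarycenter μ x π i ∈ convexHull ℝ (Set.range x) := by
  have hπμ := hπ.2.1 i
  have : rowBarycenter μ x π i = Finset.univ.centerMass (π i) x := by
    rw [Finset.centerMass, hπμ]; rfl
  exact this ▸ Finset.centerMass_mem_convexHull _ (fun j _ => hπ.1 i j) (hπμ ▸ hμ)
    fun j _ => Set.mem_range_self j

theorem barycentricCost_le_relaxedCost {ι : Type*} [Fintype ι] {y : ι → E}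
    {πx : Fin M → Fin M → ℝ} {πy : Fin M → ι → ℝ} (hμ : ∀ i, 0 < μ i)
    (hc : ∀ a, ConvexOn ℝ Set.univ (c a)) (h : IsRelaxedCoupling μ ν x y πx πy) :
    barycentricCost μ x c πx ≤ relaxedCost x c y πy := by
  refine Finset.sum_le_sum fun i _ => ?_
  obtain ⟨-, hπy0, hπyμ, hbary⟩ := h
  have hjensen := (hc (x i)).map_centerMass_le (t := Finset.univ) (p := y)
    (fun k _ => hπy0 i k) (hπyμ i ▸ hμ i) fun _ _ => Set.mem_univ _
  rw [Finset.centerMass, Finset.centerMass, hπyμ i] at hjensen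
  rw [rowBarycenter, hbary i]
  calc μ i * c (x i) ((μ i)⁻¹ • ∑ k, πy i k • y k)
      ≤ μ i * (μ i)⁻¹ • ∑ k, πy i k • (c (x i) ∘ y) k :=
        mul_le_mul_of_nonneg_left hjensen (hμ i).le
    _ = ∑ k, πy i k * c (x i) (y k) := by
        rw [smul_eq_mul, mul_inv_cancel_left₀ (hμ i).ne']; rfl

end Relaxation

section Approximation

variable {E : Type*} [NormedAddCommGroup E] [InnerProductSpace ℝ E] [CompleteSpace E] {M : ℕ}
  {μ ν : Fin M → ℝ} {x : Fin M → E} {c : E → E → ℝ}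

theorem exists_relaxedCoupling_relaxedCost_le {ι : Type*} [Fintype ι] (hμ : ∀ i, 0 < μ i)
    (hμs : ∑ i, μ i = 1) {π : Fin M → Fin M → ℝ} (hπ : π ∈ PiSet μ ν) (y : ι → E) {η ε : ℝ}
    (hη : 0 ≤ η) (hnet : ∀ i, ∀ b ∈ closedBall (rowBarycenter μ x π i) η, ∃ k, dist b (y k) ≤ η)
    (hcη : ∀ i, ∀ z ∈ closedBall (rowBarycenter μ x π i) (2 * η),
      c (x i) z ≤ c (x i) (rowBarycenter μ x π i) + ε) :
    ∃ σ, IsRelaxedCoupling μ ν x y π σ ∧ relaxedCost x c y σ ≤ barycentricCost μ x c π + ε := by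
  choose w hw0 hw1 hwy hwnear using fun i => exists_weights_near_of_net y hη (hnet i)
  refine ⟨fun i k => μ i * w i k, ⟨hπ, fun i k => mul_nonneg (hμ i).le (hw0 i k),
    fun i => by rw [← Finset.mul_sum, hw1 i, mul_one], fun i => ?_⟩, ?_⟩
  · simp_rw [mul_smul, ← Finset.smul_sum, hwy i, rowBarycenter, smul_inv_smul₀ (hμ i).ne']
  have hrow : ∀ i, ∑ k, w i k * c (x i) (y k) ≤ c (x i) (rowBarycenter μ x π i) + ε := by
    intro i
    calc ∑ k, w i k * c (x i) (y k)
        ≤ ∑ k, w i k * (c (x i) (rowBarycenter μ x π i) + ε) := by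
          refine Finset.sum_le_sum fun k _ => ?_
          rcases eq_or_ne (w i k) 0 with hk | hk
          · simp [hk]
          · exact mul_le_mul_of_nonneg_left (hcη i _ (hwnear i k hk)) (hw0 i k)
      _ = c (x i) (rowBarycenter μ x π i) + ε := by rw [← Finset.sum_mul, hw1 i, one_mul]
  calc relaxedCost x c y (fun i k => μ i * w i k)
      = ∑ i, μ i * ∑ k, w i k * c (x i) (y k) := by
        simp_rw [relaxedCost, Finset.mul_sum, mul_assoc]
    _ ≤ ∑ i, μ i * (c (x i) (rowBarycenter μ x π i) + ε) :=
        Finset.sum_le_sum fun i _ => mul_le_mul_of_nonneg_left (hrow i) (hμ i).le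
    _ = barycentricCost μ x c π + ε := by
        simp_rw [barycentricCost, mul_add]
        rw [Finset.sum_add_distrib, ← Finset.sum_mul, hμs, one_mul]

theorem eventually_relaxedCost_le {ι : ℕ → Type*} [∀ n, Fintype (ι n)] (hμ : ∀ i, 0 < μ i)
    (hμs : ∑ i, μ i = 1) (hc : ∀ a, Continuous (c a)) {U : Set E} (hU : IsOpen U)
    {π : Fin M → Fin M → ℝ} (hπ : π ∈ PiSet μ ν) (hπU : ∀ i, rowBarycenter μ x π i ∈ U)
    {y : ∀ n, ι n → E} (hdist : ∀ ε > (0 : ℝ), ∃ n₀ : ℕ, ∀ n ≥ n₀, ∀ a ∈ U, ∃ k, ‖a - y n k‖ ≤ ε)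
    {πy : ∀ n, Fin M → ι n → ℝ}
    (hopt : ∀ n σx σy, IsRelaxedCoupling μ ν x (y n) σx σy →
      relaxedCost x c (y n) (πy n) ≤ relaxedCost x c (y n) σy)
    {ε : ℝ} (hε : 0 < ε) :
    ∀ᶠ n in atTop, relaxedCost x c (y n) (πy n) ≤ barycentricCost μ x c π + ε := by
  set m := rowBarycenter μ x π
  obtain ⟨r, hr, hrW⟩ := exists_pos_forall_closedBall_subset
    (W := fun i => U ∩ c (x i) ⁻¹' Set.Iio (c (x i) (m i) + ε)) fun i =>
      Filter.inter_mem (hU.mem_nhds (hπU i))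
        ((hc (x i)).continuousAt.preimage_mem_nhds (Iio_mem_nhds (lt_add_of_pos_right _ hε)))
  obtain ⟨n₀, hn₀⟩ := hdist (r / 2) (half_pos hr)
  refine eventually_atTop.2 ⟨n₀, fun n hn => ?_⟩
  have hnet : ∀ i, ∀ b ∈ closedBall (m i) (r / 2), ∃ k, dist b (y n k) ≤ r / 2 := by
    intro i b hb
    obtain ⟨k, hk⟩ := hn₀ n hn b
      (hrW i (closedBall_subset_closedBall (half_le_self hr.le) hb)).1
    exact ⟨k, (dist_eq_norm b (y n k)).trans_le hk⟩
  have hcr : ∀ i, ∀ z ∈ closedBall (m i) (2 * (r / 2)), c (x i) z ≤ c (x i) (m i) + ε := by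
    intro i z hz
    rw [mul_div_cancel₀ r two_ne_zero] at hz
    exact (hrW i hz).2.le
  obtain ⟨σ, hσ, hσcost⟩ :=
    exists_relaxedCoupling_relaxedCost_le hμ hμs hπ (y n) (half_pos hr).le hnet hcr
  exact (hopt n _ _ hσ).trans hσcost

end Approximation

theorem stmt13_general {d M : ℕ}
    (x : Fin M → EuclideanSpace ℝ (Fin d))
    (μ ν : Fin M → ℝ) (hμ : ∀ i, 0 < μ i) (hμs : ∑ i, μ i = 1)
    (c : EuclideanSpace ℝ (Fin d) → EuclideanSpace ℝ (Fin d) → ℝ)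
    (hc : ∀ a, ConvexOn ℝ Set.univ (c a))
    (V : ℝ)
    (hV : V = sInf ((fun π : Fin M → Fin M → ℝ =>
      ∑ i, μ i * c (x i) ((μ i)⁻¹ • ∑ j, π i j • x j)) '' PiSet μ ν))
    (U : Set (EuclideanSpace ℝ (Fin d))) (hUopen : IsOpen U)
    (hXU : convexHull ℝ (Set.range x) ⊆ U)
    (N : ℕ → ℕ) (y : (n : ℕ) → Fin (N n) → EuclideanSpace ℝ (Fin d))
    (hdist : ∀ ε > (0 : ℝ), ∃ n₀ : ℕ, ∀ n ≥ n₀, ∀ a ∈ U, ∃ k, ‖a - y n k‖ ≤ ε)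
    (πx : (n : ℕ) → Fin M → Fin M → ℝ)
    (πy : (n : ℕ) → Fin M → Fin (N n) → ℝ)
    -- (π̂ˣⁿ, π̂ʸⁿ) is feasible for the relaxed problem w.r.t. `Yₙ` …
    (hfeas : ∀ n, πx n ∈ PiSet μ ν ∧ (∀ i k, 0 ≤ πy n i k) ∧
      (∀ i, ∑ k, πy n i k = μ i) ∧
      (∀ i, ∑ j, πx n i j • x j = ∑ k, πy n i k • y n k))
    -- … and optimal:
    (hopt : ∀ n, ∀ (σx : Fin M → Fin M → ℝ) (σy : Fin M → Fin (N n) → ℝ),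
      σx ∈ PiSet μ ν → (∀ i k, 0 ≤ σy i k) → (∀ i, ∑ k, σy i k = μ i) →
      (∀ i, ∑ j, σx i j • x j = ∑ k, σy i k • y n k) →
      ∑ i, ∑ k, πy n i k * c (x i) (y n k) ≤
        ∑ i, ∑ k, σy i k * c (x i) (y n k)) :
    Tendsto (fun n => ∑ i, μ i * c (x i) ((μ i)⁻¹ • ∑ j, πx n i j • x j))
      atTop (𝓝 V) ∧
    Tendsto (fun n => ∑ i, ∑ k, πy n i k * c (x i) (y n k)) atTop (𝓝 V) := by
  have hcont : ∀ a, Continuous (c a) := fun a =>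
    continuousOn_univ.1 ((hc a).continuousOn isOpen_univ)
  obtain ⟨⟨π₀, hπ₀, hVπ₀⟩, hVle⟩ : IsLeast (barycentricCost μ x c '' PiSet μ ν) V :=
    hV ▸ isLeast_sInf_barycentricCost hcont ⟨πx 0, (hfeas 0).1⟩
  have hlower : ∀ n, V ≤ barycentricCost μ x c (πx n) := fun n =>
    hVle ⟨πx n, (hfeas n).1, rfl⟩
  have hjensen : ∀ n, barycentricCost μ x c (πx n) ≤ relaxedCost x c (y n) (πy n) := fun n =>
    barycentricCost_le_relaxedCost hμ hc (hfeas n)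
  have hupper : ∀ ε > 0, ∀ᶠ n in atTop, relaxedCost x c (y n) (πy n) ≤ V + ε := fun ε hε =>
    hVπ₀ ▸ eventually_relaxedCost_le hμ hμs hcont hUopen hπ₀
      (fun i => hXU (rowBarycenter_mem_convexHull hπ₀ (hμ i))) hdist
      (fun n σx σy h => hopt n σx σy h.1 h.2.1 h.2.2.1 h.2.2.2) hε
  have hrelaxed : Tendsto (fun n => relaxedCost x c (y n) (πy n)) atTop (𝓝 V) :=
    tendsto_of_forall_le_of_eventually_le_add (fun n => (hlower n).trans (hjensen n)) hupper
  exact ⟨tendsto_of_tendsto_of_tendsto_of_le_of_le tendsto_const_nhds hrelaxed hlower hjensen,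
    hrelaxed⟩

/-- Convergence of the relaxed barycentric weak OT values to the weak OT
value `V(μ, ν)` as the auxiliary grids `Yₙ` become dense. -/
theorem stmt13 {d M : ℕ}
    (x : Fin M → EuclideanSpace ℝ (Fin d))
    (μ ν : Fin M → ℝ) (hμ : ∀ i, 0 < μ i) (hμs : ∑ i, μ i = 1)
    (hν : ∀ j, 0 ≤ ν j) (hνs : ∑ j, ν j = 1)
    (c : EuclideanSpace ℝ (Fin d) → EuclideanSpace ℝ (Fin d) → ℝ)
    (hc : ∀ a, ConvexOn ℝ Set.univ (c a))
    (V : ℝ)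
    (hV : V = sInf ((fun π : Fin M → Fin M → ℝ =>
      ∑ i, μ i * c (x i) ((μ i)⁻¹ • ∑ j, π i j • x j)) '' PiSet μ ν))
    (U : Set (EuclideanSpace ℝ (Fin d))) (hUopen : IsOpen U)
    (hXU : convexHull ℝ (Set.range x) ⊆ U)
    (N : ℕ → ℕ) (y : (n : ℕ) → Fin (N n) → EuclideanSpace ℝ (Fin d))
    (hUY : ∀ n, U ⊆ convexHull ℝ (Set.range (y n)))
    (hdist : ∀ ε > (0 : ℝ), ∃ n₀ : ℕ, ∀ n ≥ n₀, ∀ a ∈ U, ∃ k, ‖a - y n k‖ ≤ ε)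
    (πx : (n : ℕ) → Fin M → Fin M → ℝ)
    (πy : (n : ℕ) → Fin M → Fin (N n) → ℝ)
    -- (π̂ˣⁿ, π̂ʸⁿ) is feasible for the relaxed problem w.r.t. `Yₙ` …
    (hfeas : ∀ n, πx n ∈ PiSet μ ν ∧ (∀ i k, 0 ≤ πy n i k) ∧
      (∀ i, ∑ k, πy n i k = μ i) ∧
      (∀ i, ∑ j, πx n i j • x j = ∑ k, πy n i k • y n k))
    -- … and optimal:
    (hopt : ∀ n, ∀ (σx : Fin M → Fin M → ℝ) (σy : Fin M → Fin (N n) → ℝ),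
      σx ∈ PiSet μ ν → (∀ i k, 0 ≤ σy i k) → (∀ i, ∑ k, σy i k = μ i) →
      (∀ i, ∑ j, σx i j • x j = ∑ k, σy i k • y n k) →
      ∑ i, ∑ k, πy n i k * c (x i) (y n k) ≤
        ∑ i, ∑ k, σy i k * c (x i) (y n k)) :
    Tendsto (fun n => ∑ i, μ i * c (x i) ((μ i)⁻¹ • ∑ j, πx n i j • x j))
      atTop (𝓝 V) ∧
    Tendsto (fun n => ∑ i, ∑ k, πy n i k * c (x i) (y n k)) atTop (𝓝 V) :=
  stmt13_general x μ ν hμ hμs c hc V hV U hUopen hXU N y hdist πx πy hfeas hopt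
end

section
/- Fix points x_1,…,x_M ∈ ℝ^d and y_1,…,y_N ∈ ℝ^d such that the convex hull of {x_1,…,x_M} is contained in the convex hull of {y_1,…,y_N}, and fix weights μ ∈ ℝ^M with positive entries and Σ_i μ_i = 1, and ν ∈ ℝ^M with nonnegative entries and Σ_j ν_j = 1. Then for every π^x ∈ Π(μ, ν) there exists π^y ∈ ℝ^{M×N} with nonnegative entries such that Σ_{k=1}^N π^y_{ik} = μ_i and Σ_{k=1}^N π^y_{ik}·y_k = Σ_{j=1}^M π^x_{ij}·x_j for every i = 1,…,M; in other words, every π^x ∈ Π(μ, ν) extends to a feasible pair (π^x, π^y) of the relaxed problem with respect to Y = {y_1,…,y_N}. -/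
/-- If the convex hull of the `xⱼ` is contained in the convex hull of the
`yₖ`, then every coupling `πˣ ∈ Π(μ, ν)` extends to a feasible pair
`(πˣ, πʸ)` of the relaxed barycentric weak OT problem. -/
theorem stmt16 {d M N : ℕ}
    (x : Fin M → EuclideanSpace ℝ (Fin d))
    (y : Fin N → EuclideanSpace ℝ (Fin d))
    (hXY : convexHull ℝ (Set.range x) ⊆ convexHull ℝ (Set.range y))
    (μ ν : Fin M → ℝ) (hμ : ∀ i, 0 < μ i) (hμs : ∑ i, μ i = 1)
    (hν : ∀ j, 0 ≤ ν j) (hνs : ∑ j, ν j = 1) :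
    ∀ πx ∈ PiSet μ ν, ∃ πy : Fin M → Fin N → ℝ,
      (∀ i k, 0 ≤ πy i k) ∧ (∀ i, ∑ k, πy i k = μ i) ∧
      ∀ i, ∑ k, πy i k • y k = ∑ j, πx i j • x j := by
  rintro πx ⟨hnn, hrow, hcol⟩
  have key : ∀ i : Fin M, ∃ w : Fin N → ℝ, (∀ k, 0 ≤ w k) ∧ (∑ k, w k = μ i) ∧
      ∑ k, w k • y k = ∑ j, πx i j • x j := by
    intro i
    have hμi := hμ i
    -- barycenter of row i
    have hb : Finset.univ.centerMass (πx i) x ∈ convexHull ℝ (Set.range x) :=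
      Finset.centerMass_mem_convexHull _ (fun j _ => hnn i j)
        (by rw [hrow i]; exact hμi) (fun j _ => Set.mem_range_self j)
    have hb' := hXY hb
    rw [convexHull_range_eq_exists_affineCombination] at hb'
    obtain ⟨s, w, hw0, hw1, hw⟩ := hb'
    refine ⟨fun k => μ i * (if k ∈ s then w k else 0), ?_, ?_, ?_⟩
    · intro k
      by_cases hk : k ∈ s
      · simp only [hk, if_true]; exact mul_nonneg hμi.le (hw0 k hk)
      · simp [hk]
    · rw [← Finset.mul_sum, Finset.sum_ite_mem, Finset.univ_inter, hw1, mul_one]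
    · have hcm : Finset.univ.centerMass (πx i) x = (μ i)⁻¹ • ∑ j, πx i j • x j := by
        rw [Finset.centerMass, hrow i]
      have haff : s.affineCombination ℝ y w = ∑ k ∈ s, w k • y k :=
        s.affineCombination_eq_linear_combination y w hw1
      have : ∑ k ∈ s, w k • y k = (μ i)⁻¹ • ∑ j, πx i j • x j := by
        rw [← haff, hw, hcm]
      have hsum : ∑ k, (if k ∈ s then w k else 0) • y k = (μ i)⁻¹ • ∑ j, πx i j • x j := by
        rw [← this]
        simp only [ite_smul, zero_smul, Finset.sum_ite_mem, Finset.univ_inter]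
      calc ∑ k, (μ i * if k ∈ s then w k else 0) • y k
          = μ i • ∑ k, (if k ∈ s then w k else 0) • y k := by
            rw [Finset.smul_sum]; congr 1; ext k; rw [mul_smul]
        _ = ∑ j, πx i j • x j := by
            rw [hsum, smul_smul, mul_inv_cancel₀ hμi.ne', one_smul]
  choose w hw0 hw1 hw2 using key
  exact ⟨w, hw0, hw1, hw2⟩
end
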